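/- arXiv:1805.05761 — 7 statements merged into one kernel-verified Lean document; each statement's English description precedes it below -/
import Mathlib

section
/- Let n ≥ 1, let 1 ≤ j ≤ i ≤ m ≤ n, and let λ ∈ Γ_m ⊂ ℝ^n. Then (S_j(λ)/C(n,j))^{1/j} ≥ (S_i(λ)/C(n,i))^{1/i}, where C(n,j) denotes the binomial coefficient 'n choose j'. (Maclaurin's inequality I.) -/
/-!
Write `E_k = S_k / C(n, k)`, the coefficients of `∏ (X + λ_i) = ∑ C(n, k) E_k X^(n-k)`.
Differentiating this polynomial keeps `E_0, …, E_{n-1}` and, by Rolle's theorem, keeps it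
real-rooted, so Newton's inequality `E_k E_{k+2} ≤ E_{k+1}²` (valid on all of `ℝⁿ`) reduces to
`k + 2` variables. There, if no `λ_i` vanishes, replacing every `λ_i` by `λ_i⁻¹` reverses the
sequence `E_0, …, E_{k+2}` up to the factor `∏ λ_i`, which turns the inequality into
`E_2 ≤ E_1²`; reducing once more to two variables, this is AM–GM.
On `Γ_m` the `E_k` with `k ≤ m` are positive, and a positive log-concave sequence with `E_0 = 1`
has `E_k^(1/k)` non-increasing.
-/

open Finset

/-- The `m`-th elementary symmetric polynomial of `lam : Fin n → ℝ`. -/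
noncomputable def esymmS (n m : ℕ) (lam : Fin n → ℝ) : ℝ :=
  ∑ s ∈ Finset.univ.powersetCard m, ∏ i ∈ s, lam i

/-- The Gårding cone `Γ_m ⊆ ℝ^n`. -/
def GammaCone (n m : ℕ) (lam : Fin n → ℝ) : Prop :=
  ∀ j : ℕ, 1 ≤ j → j ≤ m → 0 < esymmS n j lam

open Polynomial

theorem Real.rpow_one_div_le_rpow_one_div_of_pow_le_pow {x y : ℝ} (hx : 0 ≤ x) (hy : 0 ≤ y)
    {a b : ℕ} (ha : a ≠ 0) (hb : b ≠ 0) (h : x ^ a ≤ y ^ b) :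
    x ^ (1 / (b : ℝ)) ≤ y ^ (1 / (a : ℝ)) := by
  rw [← pow_le_pow_iff_left₀ (by positivity) (by positivity) (mul_ne_zero ha hb)]
  simp only [one_div]
  rwa [pow_mul', Real.rpow_inv_natCast_pow hx hb, pow_mul, Real.rpow_inv_natCast_pow hy ha]

theorem pow_succ_le_pow_of_mul_le_sq {a : ℕ → ℝ} {m : ℕ} (h0 : a 0 = 1)
    (hpos : ∀ k ≤ m, 0 < a k) (hlc : ∀ k, k + 2 ≤ m → a k * a (k + 2) ≤ a (k + 1) ^ 2)
    {k : ℕ} (hk : k + 1 ≤ m) : a (k + 1) ^ k ≤ a k ^ (k + 1) := by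
  induction k with
  | zero => simp [h0]
  | succ k ih =>
    have hak := hpos k (by omega)
    refine le_of_mul_le_mul_right ?_ (pow_pos hak (k + 1))
    calc a (k + 2) ^ (k + 1) * a k ^ (k + 1) = (a k * a (k + 2)) ^ (k + 1) := by ring
      _ ≤ (a (k + 1) ^ 2) ^ (k + 1) :=
          pow_le_pow_left₀ (mul_pos hak (hpos _ hk)).le (hlc k hk) _
      _ = a (k + 1) ^ (k + 2) * a (k + 1) ^ k := by ring
      _ ≤ a (k + 1) ^ (k + 2) * a k ^ (k + 1) :=
          mul_le_mul_of_nonneg_left (ih (by omega)) (pow_nonneg (hpos _ (by omega)).le _)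

theorem rpow_one_div_le_of_mul_le_sq {a : ℕ → ℝ} {m : ℕ} (h0 : a 0 = 1)
    (hpos : ∀ k ≤ m, 0 < a k) (hlc : ∀ k, k + 2 ≤ m → a k * a (k + 2) ≤ a (k + 1) ^ 2)
    {i j : ℕ} (hj : 1 ≤ j) (hji : j ≤ i) (him : i ≤ m) :
    a i ^ (1 / (i : ℝ)) ≤ a j ^ (1 / (j : ℝ)) := by
  induction i, hji using Nat.le_induction with
  | base => exact le_rfl
  | succ i hji ih =>
    refine le_trans ?_ (ih (by omega))
    exact Real.rpow_one_div_le_rpow_one_div_of_pow_le_pow (hpos _ him).le (hpos _ (by omega)).le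
      (by omega) (by omega) (pow_succ_le_pow_of_mul_le_sq h0 hpos hlc him)

noncomputable def esymmMean (n k : ℕ) (lam : Fin n → ℝ) : ℝ :=
  esymmS n k lam / n.choose k

theorem esymmS_one (n : ℕ) (f : Fin n → ℝ) : esymmS n 1 f = ∑ i, f i := by
  simp [esymmS, powersetCard_one]

theorem esymmMean_zero (n : ℕ) (f : Fin n → ℝ) : esymmMean n 0 f = 1 := by
  simp [esymmMean, esymmS]

theorem esymmMean_self (n : ℕ) (f : Fin n → ℝ) : esymmMean n n f = ∏ i, f i := by
  have h : (univ : Finset (Fin n)).powersetCard n = {univ} := by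
    simpa using powersetCard_self (univ : Finset (Fin n))
  simp [esymmMean, esymmS, h]

theorem GammaCone.esymmMean_pos {n m k : ℕ} {lam : Fin n → ℝ} (hlam : GammaCone n m lam)
    (hmn : m ≤ n) (hk : k ≤ m) : 0 < esymmMean n k lam := by
  rcases Nat.eq_zero_or_pos k with rfl | hk0
  · simp [esymmMean_zero]
  · exact div_pos (hlam k hk0 hk) (by exact_mod_cast Nat.choose_pos (hk.trans hmn))

theorem esymmS_inv_mul_prod {d j : ℕ} (μ : Fin d → ℝ) (hμ : ∀ i, μ i ≠ 0) (hj : j ≤ d) :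
    esymmS d j μ⁻¹ * ∏ i, μ i = esymmS d (d - j) μ := by
  rw [esymmS, esymmS, sum_mul]
  refine sum_nbij' compl compl (fun s hs => ?_) (fun s hs => ?_) (fun s _ => compl_compl s)
    (fun s _ => compl_compl s) (fun s _ => ?_)
  · simp only [mem_powersetCard_univ, card_compl, Fintype.card_fin] at hs ⊢
    omega
  · simp only [mem_powersetCard_univ, card_compl, Fintype.card_fin] at hs ⊢
    omega
  · rw [← prod_mul_prod_compl s μ, ← mul_assoc, ← prod_mul_distrib]
    simp [hμ]

theorem esymmMean_inv_mul_prod {d j : ℕ} (μ : Fin d → ℝ) (hμ : ∀ i, μ i ≠ 0) (hj : j ≤ d) :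
    esymmMean d j μ⁻¹ * ∏ i, μ i = esymmMean d (d - j) μ := by
  rw [esymmMean, esymmMean, Nat.choose_symm hj, div_mul_eq_mul_div, esymmS_inv_mul_prod μ hμ hj]

theorem Polynomial.Splits.derivative {p : ℝ[X]} (hp : p.Splits) : p.derivative.Splits := by
  rw [splits_iff_card_roots] at hp ⊢
  have := card_roots_le_derivative p
  have := card_roots' p.derivative
  rw [natDegree_derivative] at *
  omega

theorem Polynomial.Splits.exists_eq_C_mul_prod_X_add_C {R : Type*} [CommRing R] [IsDomain R]
    {f : R[X]} (hf : f.Splits) {d : ℕ} (hd : f.natDegree = d) :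
    ∃ ν : Fin d → R, f = C f.leadingCoeff * ∏ i, (X + C (ν i)) := by
  obtain ⟨l, hl⟩ := Quot.exists_rep f.roots
  have hlen : l.length = d := by
    rw [← hd, hf.natDegree_eq_card_roots, ← hl]
    rfl
  subst hlen
  refine ⟨fun i => -l.get i, ?_⟩
  conv_lhs => rw [hf.eq_prod_roots, ← hl]
  congr 1
  rw [← List.prod_ofFn]
  simp only [sub_eq_add_neg, Multiset.quot_mk_to_coe', Multiset.map_coe, Multiset.prod_coe,
    List.get_eq_getElem, map_neg]
  rw [List.ofFn_getElem_eq_map l fun x => X + -C x]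

theorem coeff_prod_X_add_C_eq_esymmS {n j : ℕ} (f : Fin n → ℝ) (hj : j ≤ n) :
    (∏ i, (X + C (f i))).coeff (n - j) = esymmS n j f := by
  rw [Finset.prod_X_add_C_coeff _ _ (by simp)]
  simp [esymmS, Nat.sub_sub_self hj]

theorem exists_esymmMean_eq_of_succ {d : ℕ} (μ : Fin (d + 1) → ℝ) :
    ∃ ν : Fin d → ℝ, ∀ j ≤ d, esymmMean d j ν = esymmMean (d + 1) j μ := by
  set p : ℝ[X] := ∏ i, (X + C (μ i))
  have hp : p.Splits := Splits.prod fun i _ => Splits.X_add_C _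
  have hdeg : p.natDegree = d + 1 := by
    rw [natDegree_prod_of_monic _ _ fun i _ => monic_X_add_C (μ i)]
    simp
  obtain ⟨ν, hν⟩ := hp.derivative.exists_eq_C_mul_prod_X_add_C (d := d) (by simp [hdeg])
  set c := p.derivative.leadingCoeff
  have hcoeff : ∀ j ≤ d, ((d + 1 - j : ℕ) : ℝ) * esymmS (d + 1) j μ = c * esymmS d j ν := by
    intro j hj
    have := congrArg (coeff · (d - j)) hν
    simp only [coeff_derivative, coeff_C_mul, coeff_prod_X_add_C_eq_esymmS ν hj] at this
    rw [show d - j + 1 = d + 1 - j by omega, coeff_prod_X_add_C_eq_esymmS μ (by omega)] at this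
    rw [← this, show d + 1 - j = d - j + 1 by omega]
    push_cast
    ring
  have hc : c = d + 1 := by simpa [esymmS] using (hcoeff 0 (Nat.zero_le d)).symm
  refine ⟨ν, fun j hj => ?_⟩
  have hchoose : (d.choose j : ℝ) * (d + 1) = (d + 1).choose j * ((d + 1 - j : ℕ) : ℝ) := by
    exact_mod_cast Nat.choose_mul_succ_eq d j
  have h1 : (0 : ℝ) < d.choose j := by exact_mod_cast Nat.choose_pos hj
  have h2 : (0 : ℝ) < (d + 1).choose j := by exact_mod_cast Nat.choose_pos (by omega)
  rw [esymmMean, esymmMean, div_eq_div_iff h1.ne' h2.ne']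
  have hj' := hcoeff j hj
  rw [hc] at hj'
  apply mul_left_cancel₀ (show (d : ℝ) + 1 ≠ 0 by positivity)
  linear_combination ((d + 1).choose j : ℝ) * hj'.symm - esymmS (d + 1) j μ * hchoose

theorem exists_esymmMean_eq_of_le {e N : ℕ} (h : e ≤ N) (μ : Fin N → ℝ) :
    ∃ ν : Fin e → ℝ, ∀ j ≤ e, esymmMean e j ν = esymmMean N j μ := by
  induction N, h using Nat.le_induction with
  | base => exact ⟨μ, fun _ _ => rfl⟩
  | succ N he ih =>
    obtain ⟨ν', hν'⟩ := exists_esymmMean_eq_of_succ μ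
    obtain ⟨ν, hν⟩ := ih ν'
    exact ⟨ν, fun j hj => (hν j hj).trans (hν' j (hj.trans he))⟩

theorem esymmMean_two_le_sq {d : ℕ} (hd : 2 ≤ d) (ν : Fin d → ℝ) :
    esymmMean d 2 ν ≤ esymmMean d 1 ν ^ 2 := by
  obtain ⟨ρ, hρ⟩ := exists_esymmMean_eq_of_le hd ν
  rw [← hρ 2 le_rfl, ← hρ 1 (by norm_num), esymmMean_self, esymmMean, esymmS_one]
  simp only [Fin.sum_univ_two, Fin.prod_univ_two, Nat.choose_one_right, Nat.cast_ofNat]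
  nlinarith [sq_nonneg (ρ 0 - ρ 1)]

theorem esymmMean_mul_le_sq {n k : ℕ} (hk : k + 2 ≤ n) (lam : Fin n → ℝ) :
    esymmMean n k lam * esymmMean n (k + 2) lam ≤ esymmMean n (k + 1) lam ^ 2 := by
  obtain ⟨μ, hμ⟩ := exists_esymmMean_eq_of_le hk lam
  rw [← hμ k (by omega), ← hμ (k + 1) (by omega), ← hμ (k + 2) le_rfl, esymmMean_self]
  by_cases h0 : ∏ i, μ i = 0
  · rw [h0, mul_zero]
    positivity
  have hμ0 : ∀ i, μ i ≠ 0 := fun i hi => h0 (prod_eq_zero (mem_univ i) hi)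
  have h1 := esymmMean_inv_mul_prod μ hμ0 (j := 1) (by omega)
  have h2 := esymmMean_inv_mul_prod μ hμ0 (j := 2) (by omega)
  rw [show k + 2 - 1 = k + 1 by omega] at h1
  rw [Nat.add_sub_cancel] at h2
  rw [← h1, ← h2]
  calc esymmMean (k + 2) 2 μ⁻¹ * (∏ i, μ i) * ∏ i, μ i
      = esymmMean (k + 2) 2 μ⁻¹ * (∏ i, μ i) ^ 2 := by ring
    _ ≤ esymmMean (k + 2) 1 μ⁻¹ ^ 2 * (∏ i, μ i) ^ 2 :=
        mul_le_mul_of_nonneg_right (esymmMean_two_le_sq (by omega) μ⁻¹) (sq_nonneg _)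
    _ = (esymmMean (k + 2) 1 μ⁻¹ * ∏ i, μ i) ^ 2 := by ring

theorem maclaurin_I_general (n : ℕ) (j i m : ℕ)
    (hj : 1 ≤ j) (hji : j ≤ i) (him : i ≤ m) (hmn : m ≤ n)
    (lam : Fin n → ℝ) (hlam : GammaCone n m lam) :
    (esymmS n i lam / (n.choose i : ℝ)) ^ ((1 : ℝ) / (i : ℝ)) ≤
      (esymmS n j lam / (n.choose j : ℝ)) ^ ((1 : ℝ) / (j : ℝ)) :=
  rpow_one_div_le_of_mul_le_sq (a := fun k => esymmMean n k lam) (esymmMean_zero n lam)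
    (fun _ hk => hlam.esymmMean_pos hmn hk) (fun _ hk => esymmMean_mul_le_sq (hk.trans hmn) lam)
    hj hji him

/-- Maclaurin's inequality I. -/
theorem maclaurin_I (n : ℕ) (hn : 1 ≤ n) (j i m : ℕ)
    (hj : 1 ≤ j) (hji : j ≤ i) (him : i ≤ m) (hmn : m ≤ n)
    (lam : Fin n → ℝ) (hlam : GammaCone n m lam) :
    (esymmS n i lam / (n.choose i : ℝ)) ^ ((1 : ℝ) / (i : ℝ)) ≤
      (esymmS n j lam / (n.choose j : ℝ)) ^ ((1 : ℝ) / (j : ℝ)) :=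
  maclaurin_I_general n j i m hj hji him hmn lam hlam
end

section
/- Let 2 ≤ m ≤ n. There exists a constant c(n,m) > 0, depending only on n and m, such that for every λ ∈ Γ_m ⊂ ℝ^n one has S_{m-1}(λ) ≥ c(n,m) · S_m(λ)^{(m-2)/(m-1)} · S_1(λ)^{1/(m-1)}. (Maclaurin's inequality II.) -/
open Finset

/-- `σ_m(λ|i)`: the `m`-th elementary symmetric polynomial of `λ` with the `i`-th entry deleted. -/
noncomputable def esymmDel (n m : ℕ) (lam : Fin n → ℝ) (i : Fin n) : ℝ :=
  ∑ s ∈ (Finset.univ.erase i).powersetCard m, ∏ l ∈ s, lam l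

/-- `σ_m(λ|ij)`: the `m`-th elementary symmetric polynomial of `λ` with the `i`-th and `j`-th entries deleted. -/
noncomputable def esymmDel2 (n m : ℕ) (lam : Fin n → ℝ) (i j : Fin n) : ℝ :=
  ∑ s ∈ ((Finset.univ.erase i).erase j).powersetCard m, ∏ l ∈ s, lam l

/- ### Auxiliary lemmas -/

theorem maclaurinAux.exists_fn (s : Multiset ℝ) :
    ∃ g : Fin (Multiset.card s) → ℝ, Multiset.map g Finset.univ.val = s := by
  refine Quotient.inductionOn s fun l => ?_
  refine ⟨l.get, ?_⟩
  show Multiset.map l.get (Finset.univ.val) = (l : Multiset ℝ)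
  have h1 : (Finset.univ.val : Multiset (Fin l.length)) = ↑(List.finRange l.length) := rfl
  rw [h1, Multiset.map_coe, ← List.ofFn_eq_map, List.ofFn_get]

theorem maclaurinAux.exists_fn' (d : ℕ) (s : Multiset ℝ) (h : Multiset.card s = d) :
    ∃ g : Fin d → ℝ, Multiset.map g Finset.univ.val = s := by
  subst h; exact maclaurinAux.exists_fn s

theorem maclaurinAux.esymmS_zero (d : ℕ) (g : Fin d → ℝ) : esymmS d 0 g = 1 := by
  simp [esymmS]

theorem maclaurinAux.esymmS_self (d : ℕ) (g : Fin d → ℝ) : esymmS d d g = ∏ i, g i := by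
  have h := Finset.powersetCard_self (Finset.univ : Finset (Fin d))
  simp only [Finset.card_fin] at h
  rw [esymmS, h, Finset.sum_singleton]

theorem maclaurinAux.esymmS_eq_esymm (d : ℕ) (g : Fin d → ℝ) (j : ℕ) :
    esymmS d j g = (Multiset.map g Finset.univ.val).esymm j :=
  (Finset.esymm_map_val g Finset.univ j).symm

theorem maclaurinAux.sum_erase_surj {ι : Type*} [DecidableEq ι] (s : Finset ι) (hs : s.Nonempty)
    (F : Finset ι → ℝ) :
    ∑ i ∈ s, F (s.erase i) = ∑ A ∈ s.powersetCard (s.card - 1), F A := by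
  have hs1 : 1 ≤ s.card := Finset.card_pos.mpr hs
  refine Finset.sum_bij (fun i _ => s.erase i) ?_ ?_ ?_ ?_
  · intro a ha
    exact Finset.mem_powersetCard.mpr ⟨Finset.erase_subset _ _, Finset.card_erase_of_mem ha⟩
  · intro a ha b hb hab
    by_contra hne
    have h2 : a ∈ s.erase b := Finset.mem_erase.mpr ⟨hne, ha⟩
    rw [← hab] at h2
    exact (Finset.mem_erase.mp h2).1 rfl
  · intro A hA
    rw [Finset.mem_powersetCard] at hA
    have hcard : (s \ A).card = 1 := by
      rw [Finset.card_sdiff_of_subset hA.1, hA.2]; omega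
    obtain ⟨a, ha⟩ := Finset.card_eq_one.mp hcard
    have has : a ∈ s ∧ a ∉ A := by
      have h3 : a ∈ s \ A := ha ▸ Finset.mem_singleton_self a
      exact ⟨(Finset.mem_sdiff.mp h3).1, (Finset.mem_sdiff.mp h3).2⟩
    refine ⟨a, has.1, ?_⟩
    show s.erase a = A
    rw [Finset.erase_eq, ← ha, Finset.sdiff_sdiff_self_left]
    exact Finset.inter_eq_right.mpr hA.1
  · intros; rfl

theorem maclaurinAux.esymmS_pred (d : ℕ) (hd : 1 ≤ d) (g : Fin d → ℝ) :
    esymmS d (d-1) g = ∑ i, ∏ j ∈ Finset.univ.erase i, g j := by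
  have : Nonempty (Fin d) := Fin.pos_iff_nonempty.mp (by omega)
  have h := maclaurinAux.sum_erase_surj (Finset.univ : Finset (Fin d)) Finset.univ_nonempty
    (fun A => ∏ j ∈ A, g j)
  simp only [Finset.card_fin] at h
  rw [esymmS, ← h]

theorem maclaurinAux.prod_erase_mul (d : ℕ) (g : Fin d → ℝ) {i j : Fin d} (hij : j ≠ i) :
    (∏ l ∈ (Finset.univ.erase i).erase j, g l) * ∏ l, g l =
      (∏ l ∈ Finset.univ.erase i, g l) * ∏ l ∈ Finset.univ.erase j, g l := by
  have h1 : g i * ∏ l ∈ Finset.univ.erase i, g l = ∏ l, g l :=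
    Finset.mul_prod_erase _ _ (Finset.mem_univ i)
  have h2 : (∏ l ∈ Finset.univ.erase i, g l) = g j * ∏ l ∈ (Finset.univ.erase i).erase j, g l :=
    (Finset.mul_prod_erase _ _ (Finset.mem_erase.mpr ⟨hij, Finset.mem_univ j⟩)).symm
  have h3 : (∏ l ∈ Finset.univ.erase j, g l) = g i * ∏ l ∈ (Finset.univ.erase i).erase j, g l := by
    rw [Finset.erase_right_comm]
    exact (Finset.mul_prod_erase _ _ (Finset.mem_erase.mpr ⟨Ne.symm hij, Finset.mem_univ i⟩)).symm
  rw [← h1, h2, h3]; ring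

theorem maclaurinAux.esymmS_sub_two (d : ℕ) (hd : 2 ≤ d) (g : Fin d → ℝ) :
    2 * (esymmS d (d-2) g * esymmS d d g) =
      (∑ i, ∏ l ∈ Finset.univ.erase i, g l)^2 - ∑ i, (∏ l ∈ Finset.univ.erase i, g l)^2 := by
  have : Nonempty (Fin d) := Fin.pos_iff_nonempty.mp (by omega)
  set P : Fin d → ℝ := fun i => ∏ l ∈ Finset.univ.erase i, g l with hP
  have hrhs : ∑ i, ∑ j ∈ Finset.univ.erase i, P i * P j = (∑ i, P i)^2 - ∑ i, (P i)^2 := by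
    have h1 : ∀ i : Fin d, ∑ j ∈ Finset.univ.erase i, P i * P j = P i * (∑ j, P j) - P i^2 := by
      intro i
      rw [← Finset.mul_sum, Finset.sum_erase_eq_sub (Finset.mem_univ i)]
      ring
    rw [Finset.sum_congr rfl (fun i _ => h1 i), Finset.sum_sub_distrib, ← Finset.sum_mul, sq]
  have hinner : ∀ i : Fin d, ∑ j ∈ Finset.univ.erase i, P i * P j =
      ∑ B ∈ (Finset.univ.erase i).powersetCard (d-2), ((∏ l ∈ B, g l) * ∏ l, g l) := by
    intro i
    have hne : (Finset.univ.erase i).Nonempty := by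
      rw [← Finset.card_pos, Finset.card_erase_of_mem (Finset.mem_univ i), Finset.card_fin]; omega
    have h := maclaurinAux.sum_erase_surj (Finset.univ.erase i) hne
      (fun B => (∏ l ∈ B, g l) * ∏ l, g l)
    rw [Finset.card_erase_of_mem (Finset.mem_univ i), Finset.card_fin,
      show d - 1 - 1 = d - 2 by omega] at h
    rw [← h]
    refine Finset.sum_congr rfl fun j hj => ?_
    exact (maclaurinAux.prod_erase_mul d g (Finset.mem_erase.mp hj).1).symm
  have hfilter : ∀ i : Fin d, (Finset.univ.erase i).powersetCard (d-2) =
      (Finset.univ.powersetCard (d-2)).filter (fun B => i ∉ B) := by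
    intro i; ext B
    simp only [Finset.mem_powersetCard, Finset.mem_filter, Finset.subset_erase]
    tauto
  have hswap : ∑ i, ∑ B ∈ (Finset.univ.erase i).powersetCard (d-2), ((∏ l ∈ B, g l) * ∏ l, g l)
      = ∑ B ∈ Finset.univ.powersetCard (d-2), 2 * ((∏ l ∈ B, g l) * ∏ l, g l) := by
    simp only [hfilter, Finset.sum_filter]
    rw [Finset.sum_comm]
    refine Finset.sum_congr rfl fun B hB => ?_
    have hcardB : B.card = d - 2 := (Finset.mem_powersetCard.mp hB).2
    have hflt : (Finset.univ.filter (fun i => i ∉ B)) = Bᶜ := by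
      ext x; simp [Finset.mem_compl]
    have hcard2 : (Finset.univ.filter (fun i => i ∉ B)).card = 2 := by
      rw [hflt, Finset.card_compl, hcardB]; simp only [Fintype.card_fin]; omega
    rw [← Finset.sum_filter, Finset.sum_const, hcard2]
    simp [mul_comm]
  calc 2 * (esymmS d (d-2) g * esymmS d d g)
      = ∑ B ∈ Finset.univ.powersetCard (d-2), 2 * ((∏ l ∈ B, g l) * ∏ l, g l) := by
        rw [esymmS, maclaurinAux.esymmS_self, Finset.sum_mul, Finset.mul_sum]
    _ = ∑ i, ∑ B ∈ (Finset.univ.erase i).powersetCard (d-2), ((∏ l ∈ B, g l) * ∏ l, g l) :=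
        hswap.symm
    _ = ∑ i, ∑ j ∈ Finset.univ.erase i, P i * P j :=
        Finset.sum_congr rfl fun i _ => (hinner i).symm
    _ = (∑ i, P i)^2 - ∑ i, (P i)^2 := hrhs

theorem maclaurinAux.two_mul_choose_two : ∀ j : ℕ, 2 * (j+1).choose 2 = (j+1) * j
  | 0 => rfl
  | j + 1 => by
    rw [Nat.choose_succ_succ, Nat.mul_add, maclaurinAux.two_mul_choose_two j,
      Nat.choose_one_right]; ring

theorem maclaurinAux.newton_base (k : ℕ) (hk : 1 ≤ k) (g : Fin (k+1) → ℝ) :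
    esymmS (k+1) (k-1) g * esymmS (k+1) (k+1) g * (((k+1).choose k : ℝ))^2 ≤
      esymmS (k+1) k g ^ 2 * ((((k+1).choose (k-1)) : ℝ) * (((k+1).choose (k+1)) : ℝ)) := by
  set P : Fin (k+1) → ℝ := fun i => ∏ l ∈ Finset.univ.erase i, g l with hP
  set S := ∑ i, P i with hS
  set Q := ∑ i, (P i)^2 with hQ
  have h2X : 2 * (esymmS (k+1) (k-1) g * esymmS (k+1) (k+1) g) = S^2 - Q := by
    have h := maclaurinAux.esymmS_sub_two (k+1) (by omega) g
    rw [show k+1-2 = k-1 by omega] at h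
    exact h
  have hEk : esymmS (k+1) k g = S := by
    have h := maclaurinAux.esymmS_pred (k+1) (by omega) g
    rw [show k+1-1 = k by omega] at h
    exact h
  have hCS : S^2 ≤ ((k:ℝ)+1) * Q := by
    have h := sq_sum_le_card_mul_sum_sq (s := (Finset.univ : Finset (Fin (k+1)))) (f := P)
    simpa using h
  have hchoosek : (((k+1).choose k : ℕ) : ℝ) = (k:ℝ)+1 := by
    rw [Nat.choose_succ_self_right]; push_cast; ring
  have hchoosekk : (k+1).choose (k+1) = 1 := Nat.choose_self _
  have hchoose2 : 2 * (((k+1).choose (k-1) : ℕ) : ℝ) = ((k:ℝ)+1) * k := by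
    have h1 : (k+1).choose (k-1) = (k+1).choose 2 := by
      have h := Nat.choose_symm (n := k+1) (k := k-1) (by omega)
      rw [show k+1-(k-1) = 2 by omega] at h
      exact h.symm
    rw [h1]
    have h2 := maclaurinAux.two_mul_choose_two k
    have h3 : ((2 * (k+1).choose 2 : ℕ) : ℝ) = (((k+1) * k : ℕ) : ℝ) := by rw [h2]
    push_cast at h3
    linarith [h3]
  rw [hEk, hchoosek, hchoosekk]
  push_cast
  nlinarith [h2X, hchoose2, mul_le_mul_of_nonneg_left hCS (by positivity : (0:ℝ) ≤ (k:ℝ)+1)]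

open Polynomial in
theorem maclaurinAux.esymm_derivative_roots (d : ℕ) (hd : 1 ≤ d) (s : Multiset ℝ)
    (hs : Multiset.card s = d) :
    ∃ t : Multiset ℝ, Multiset.card t = d - 1 ∧ ∀ j, j ≤ d - 1 →
      (d : ℝ) * t.esymm j = ((d - j : ℕ) : ℝ) * s.esymm j := by
  set f : ℝ[X] := (s.map fun r => X - C r).prod with hf
  have hmonic : f.Monic := monic_multiset_prod_of_monic _ _ (fun a _ => monic_X_sub_C a)
  have hdeg : f.natDegree = d := by
    rw [hf, natDegree_multiset_prod_X_sub_C_eq_card, hs]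
  have hroots : f.roots = s := roots_multiset_prod_X_sub_C s
  have hdeg'le : (derivative f).natDegree ≤ d - 1 := by
    have h := natDegree_derivative_le f; omega
  have hcardge : d - 1 ≤ Multiset.card (derivative f).roots := by
    have h1 := Polynomial.card_roots_le_derivative f
    rw [hroots, hs] at h1; omega
  have hcard' : Multiset.card (derivative f).roots = d - 1 :=
    le_antisymm (le_trans (Polynomial.card_roots' _) hdeg'le) hcardge
  have hdeg' : (derivative f).natDegree = d - 1 :=
    le_antisymm hdeg'le (le_trans hcardge (Polynomial.card_roots' _))
  have hlead : (derivative f).leadingCoeff = (d : ℝ) := by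
    rw [Polynomial.leadingCoeff, hdeg', Polynomial.coeff_derivative,
      show d - 1 + 1 = d by omega, ← hdeg, hmonic.coeff_natDegree, hdeg]
    rw [Nat.cast_sub hd]
    ring
  refine ⟨(derivative f).roots, hcard', ?_⟩
  intro j hj
  have hkk : d - 1 - (d - 1 - j) = j := by omega
  have h1 : (derivative f).coeff (d-1-j) =
      (d : ℝ) * ((-1)^j * ((derivative f).roots.esymm j)) := by
    rw [Polynomial.coeff_eq_esymm_roots_of_card (hcard'.trans hdeg'.symm) (by omega), hlead,
      hdeg', hkk, mul_assoc]
  have h2 : (derivative f).coeff (d-1-j) = ((-1:ℝ))^j * s.esymm j * ((d - j : ℕ) : ℝ) := by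
    rw [Polynomial.coeff_derivative, show d - 1 - j + 1 = d - j by omega]
    have h3 : f.coeff (d - j) = (-1)^j * s.esymm j := by
      have h4 := Multiset.prod_X_sub_C_coeff s (show d - j ≤ Multiset.card s by rw [hs]; omega)
      rw [hs, show d - (d - j) = j by omega] at h4
      exact h4
    rw [h3]
    have hc : ((d-1-j:ℕ):ℝ) + 1 = ((d-j:ℕ):ℝ) := by
      have h4 : (d-1-j) + 1 = d - j := by omega
      exact_mod_cast congrArg (Nat.cast : ℕ → ℝ) h4
    linear_combination s.esymm j * (-1:ℝ)^j * hc
  refine mul_left_cancel₀ (by norm_num : ((-1:ℝ))^j ≠ 0) ?_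
  linear_combination h1.symm.trans h2

theorem maclaurinAux.choose_rel (d j : ℕ) :
    (d + 1 - j) * ((d+1).choose j) = (d+1) * d.choose j := by
  calc (d + 1 - j) * ((d+1).choose j) = (d+1).choose j * (d+1-j) := mul_comm _ _
    _ = (d+1).choose (j+1) * (j+1) := (Nat.choose_succ_right_eq (d+1) j).symm
    _ = (d+1) * d.choose j := (Nat.add_one_mul_choose_eq d j).symm

theorem maclaurinAux.newton_ineq (d : ℕ) : ∀ (g : Fin d → ℝ) (k : ℕ), 1 ≤ k → k + 1 ≤ d →
    esymmS d (k-1) g * esymmS d (k+1) g * ((d.choose k : ℝ))^2 ≤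
      esymmS d k g ^ 2 * ((d.choose (k-1) : ℝ) * (d.choose (k+1) : ℝ)) := by
  induction d with
  | zero => intro g k hk1 hkd; omega
  | succ d' IH =>
    intro g k hk1 hkd
    rcases eq_or_lt_of_le hkd with heq | hlt
    · have hkd2 : k = d' := by omega
      subst hkd2
      exact maclaurinAux.newton_base k hk1 g
    · have hkd' : k + 1 ≤ d' := by omega
      set s : Multiset ℝ := Multiset.map g Finset.univ.val with hsdef
      have hcard : Multiset.card s = d' + 1 := by simp [hsdef]
      obtain ⟨t, hct, hrel⟩ :=
        maclaurinAux.esymm_derivative_roots (d'+1) (by omega) s hcard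
      rw [show d'+1-1 = d' by omega] at hct hrel
      obtain ⟨g', hg'⟩ := maclaurinAux.exists_fn' d' t hct
      have hE : ∀ j, esymmS (d'+1) j g = s.esymm j := fun j =>
        maclaurinAux.esymmS_eq_esymm _ g j
      have hE' : ∀ j, esymmS d' j g' = t.esymm j := fun j => by
        rw [maclaurinAux.esymmS_eq_esymm _ g' j, hg']
      have ih := IH g' k hk1 hkd'
      have ha := hrel (k-1) (by omega)
      have hb := hrel (k+1) (by omega)
      have hc := hrel k (by omega)
      rw [← hE (k-1), ← hE' (k-1)] at ha
      rw [← hE (k+1), ← hE' (k+1)] at hb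
      rw [← hE k, ← hE' k] at hc
      set D : ℝ := ((d'+1 : ℕ) : ℝ) with hD
      set α : ℝ := ((d'+1-(k-1) : ℕ) : ℝ) with hα
      set β : ℝ := ((d'+1-(k+1) : ℕ) : ℝ) with hβ
      set γ : ℝ := ((d'+1-k : ℕ) : ℝ) with hγ
      set E1 := esymmS (d'+1) (k-1) g with hE1
      set E2 := esymmS (d'+1) k g with hE2
      set E3 := esymmS (d'+1) (k+1) g with hE3
      set F1 := esymmS d' (k-1) g' with hF1
      set F2 := esymmS d' k g' with hF2
      set F3 := esymmS d' (k+1) g' with hF3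
      set C1 : ℝ := (((d'+1).choose (k-1) : ℕ) : ℝ) with hC1
      set C2 : ℝ := (((d'+1).choose k : ℕ) : ℝ) with hC2
      set C3 : ℝ := (((d'+1).choose (k+1) : ℕ) : ℝ) with hC3
      set B1 : ℝ := ((d'.choose (k-1) : ℕ) : ℝ) with hB1
      set B2 : ℝ := ((d'.choose k : ℕ) : ℝ) with hB2
      set B3 : ℝ := ((d'.choose (k+1) : ℕ) : ℝ) with hB3
      have hca : α * C1 = D * B1 := by
        rw [hα, hC1, hD, hB1]
        exact_mod_cast congrArg (Nat.cast : ℕ → ℝ) (maclaurinAux.choose_rel d' (k-1))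
      have hcb : β * C3 = D * B3 := by
        rw [hβ, hC3, hD, hB3]
        exact_mod_cast congrArg (Nat.cast : ℕ → ℝ) (maclaurinAux.choose_rel d' (k+1))
      have hcc : γ * C2 = D * B2 := by
        rw [hγ, hC2, hD, hB2]
        exact_mod_cast congrArg (Nat.cast : ℕ → ℝ) (maclaurinAux.choose_rel d' k)
      have hαpos : (0:ℝ) < α := by
        rw [hα]; exact_mod_cast Nat.pos_of_ne_zero (by omega)
      have hβpos : (0:ℝ) < β := by
        rw [hβ]; exact_mod_cast Nat.pos_of_ne_zero (by omega)
      have hγpos : (0:ℝ) < γ := by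
        rw [hγ]; exact_mod_cast Nat.pos_of_ne_zero (by omega)
      have hDnonneg : (0:ℝ) ≤ D := by rw [hD]; positivity
      have m1 : (α*E1) * (β*E3) * (γ*C2)^2 = (D*F1)*(D*F3)*(D*B2)^2 := by
        rw [← ha, ← hb, hcc]
      have m2 : (γ*E2)^2 * ((α*C1) * (β*C3)) = (D*F2)^2 * ((D*B1)*(D*B3)) := by
        rw [← hc, hca, hcb]
      have final2 : (α*β*γ^2) * (E1*E3*C2^2) ≤ (α*β*γ^2) * (E2^2*(C1*C3)) := by
        calc (α*β*γ^2) * (E1*E3*C2^2) = (α*E1)*(β*E3)*(γ*C2)^2 := by ring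
          _ = (D*F1)*(D*F3)*(D*B2)^2 := m1
          _ = D^4 * (F1*F3*B2^2) := by ring
          _ ≤ D^4 * (F2^2*(B1*B3)) := by
              apply mul_le_mul_of_nonneg_left ih (by positivity)
          _ = (D*F2)^2*((D*B1)*(D*B3)) := by ring
          _ = (γ*E2)^2*((α*C1)*(β*C3)) := m2.symm
          _ = (α*β*γ^2) * (E2^2*(C1*C3)) := by ring
      exact le_of_mul_le_mul_left final2 (by positivity)

theorem maclaurinAux.chain (m : ℕ) (p : ℕ → ℝ) (hm : 2 ≤ m) (hpos : ∀ j, j ≤ m → 0 < p j)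
    (hN : ∀ k, 1 ≤ k → k + 1 ≤ m → p (k-1) * p (k+1) ≤ p k ^ 2) :
    p m ^ (m-2) * p 1 ≤ p (m-1) ^ (m-1) := by
  suffices h : ∀ k, 1 ≤ k → k ≤ m - 1 → p (k+1) ^ (k-1) * p 1 ≤ p k ^ k by
    have h2 := h (m-1) (by omega) le_rfl
    rw [show m - 1 + 1 = m by omega, show m - 1 - 1 = m - 2 by omega] at h2
    exact h2
  intro k hk1
  induction k, hk1 using Nat.le_induction with
  | base =>
    intro _
    simp
  | succ k hk IHk =>
    intro hk2
    have IH' := IHk (by omega)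
    have hNk := hN (k+1) (by omega) (by omega)
    rw [show k+1-1 = k by omega] at hNk
    have hp1 : 0 < p 1 := hpos 1 (by omega)
    have hpk : 0 < p k := hpos k (by omega)
    have hpk1 : 0 < p (k+1) := hpos (k+1) (by omega)
    have hpk2 : 0 < p (k+2) := hpos (k+2) (by omega)
    rw [show k+1+1 = k+2 by omega, show k+1-1 = k by omega]
    have h1 : p (k+2)^k * p 1 * p (k+1)^(k-1) ≤ p (k+1)^(k+1) * p (k+1)^(k-1) := by
      calc p (k+2)^k * p 1 * p (k+1)^(k-1) = p (k+2)^k * (p (k+1)^(k-1) * p 1) := by ring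
        _ ≤ p (k+2)^k * p k ^ k :=
            mul_le_mul_of_nonneg_left IH' (pow_nonneg hpk2.le k)
        _ = (p (k+2) * p k)^k := (mul_pow _ _ _).symm
        _ ≤ (p (k+1)^2)^k := by
            apply pow_le_pow_left₀ (by positivity)
            linarith [hNk]
        _ = p (k+1)^(2*k) := (pow_mul _ 2 k).symm
        _ = p (k+1)^(k+1) * p (k+1)^(k-1) := by
            rw [← pow_add]
            congr 1
            omega
    exact le_of_mul_le_mul_right h1 (pow_pos hpk1 (k-1))

/-- Maclaurin's inequality II. -/
theorem maclaurin_II (n m : ℕ) (hm : 2 ≤ m) (hmn : m ≤ n) :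
    ∃ c : ℝ, 0 < c ∧ ∀ lam : Fin n → ℝ, GammaCone n m lam →
      c * esymmS n m lam ^ (((m : ℝ) - 2) / ((m : ℝ) - 1)) *
        esymmS n 1 lam ^ ((1 : ℝ) / ((m : ℝ) - 1)) ≤ esymmS n (m - 1) lam := by
  have hμ1 : (0:ℝ) < (m:ℝ) - 1 := by
    have : (2:ℝ) ≤ (m:ℝ) := by exact_mod_cast hm
    linarith
  have hμ2 : (0:ℝ) ≤ (m:ℝ) - 2 := by
    have : (2:ℝ) ≤ (m:ℝ) := by exact_mod_cast hm
    linarith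
  have hCm1pos : (0:ℝ) < ((n.choose (m-1) : ℕ) : ℝ) := by
    exact_mod_cast Nat.choose_pos (by omega)
  have hCmpos : (0:ℝ) < ((n.choose m : ℕ) : ℝ) := by
    exact_mod_cast Nat.choose_pos hmn
  have hC1pos : (0:ℝ) < ((n.choose 1 : ℕ) : ℝ) := by
    exact_mod_cast Nat.choose_pos (by omega)
  set r : ℝ := ((m:ℝ) - 2) / ((m:ℝ) - 1) with hr
  set tt : ℝ := (1:ℝ) / ((m:ℝ) - 1) with htt
  have hCmr : (0:ℝ) < ((n.choose m : ℕ) : ℝ) ^ r := Real.rpow_pos_of_pos hCmpos r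
  have hC1t : (0:ℝ) < ((n.choose 1 : ℕ) : ℝ) ^ tt := Real.rpow_pos_of_pos hC1pos tt
  refine ⟨((n.choose (m-1) : ℕ) : ℝ) * (((n.choose m : ℕ) : ℝ) ^ r *
    ((n.choose 1 : ℕ) : ℝ) ^ tt)⁻¹, by positivity, ?_⟩
  intro lam hG
  set p : ℕ → ℝ := fun j => esymmS n j lam / ((n.choose j : ℕ) : ℝ) with hp
  have hpos : ∀ j, j ≤ m → 0 < p j := by
    intro j hj
    rcases Nat.eq_zero_or_pos j with rfl | hj1
    · simp [hp, maclaurinAux.esymmS_zero]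
    · exact div_pos (hG j hj1 hj)
        (by exact_mod_cast Nat.choose_pos (le_trans hj hmn))
  have hN : ∀ k, 1 ≤ k → k + 1 ≤ m → p (k-1) * p (k+1) ≤ p k ^ 2 := by
    intro k hk1 hk2
    have hnew := maclaurinAux.newton_ineq n lam k hk1 (le_trans hk2 hmn)
    have hb : (0:ℝ) < ((n.choose (k-1) : ℕ) : ℝ) * ((n.choose (k+1) : ℕ) : ℝ) := by
      have b1 : (0:ℝ) < ((n.choose (k-1) : ℕ) : ℝ) := by
        exact_mod_cast Nat.choose_pos (by omega)
      have b2 : (0:ℝ) < ((n.choose (k+1) : ℕ) : ℝ) := by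
        exact_mod_cast Nat.choose_pos (by omega)
      positivity
    have hd : (0:ℝ) < (((n.choose k : ℕ) : ℝ))^2 := by
      have b3 : (0:ℝ) < ((n.choose k : ℕ) : ℝ) := by
        exact_mod_cast Nat.choose_pos (by omega)
      positivity
    rw [hp]
    simp only []
    rw [div_mul_div_comm, div_pow, div_le_div_iff₀ hb hd]
    linear_combination hnew
  have hchain := maclaurinAux.chain m p hm hpos hN
  have hpm : 0 < p m := hpos m le_rfl
  have hp1 : 0 < p 1 := hpos 1 (by omega)
  have hpm1 : 0 < p (m-1) := hpos (m-1) (by omega)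
  -- extract the rpow inequality
  have hq : p m ^ r * p 1 ^ tt ≤ p (m-1) := by
    rw [← Real.rpow_le_rpow_iff (by positivity) hpm1.le hμ1]
    have hhl : (p m ^ r * p 1 ^ tt) ^ ((m:ℝ)-1) = p m ^ (m-2 : ℕ) * p 1 := by
      rw [Real.mul_rpow (Real.rpow_nonneg hpm.le r) (Real.rpow_nonneg hp1.le tt),
        ← Real.rpow_natCast (p m) (m-2), ← Real.rpow_mul hpm.le, ← Real.rpow_mul hp1.le,
        hr, htt, div_mul_cancel₀ _ (ne_of_gt hμ1), one_div, inv_mul_cancel₀ (ne_of_gt hμ1),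
        Real.rpow_one, Nat.cast_sub hm]
      norm_num
    have hhr : (p (m-1)) ^ ((m:ℝ)-1) = p (m-1) ^ (m-1 : ℕ) := by
      rw [← Real.rpow_natCast (p (m-1)) (m-1), Nat.cast_sub (by omega : 1 ≤ m)]
      norm_num
    rw [hhl, hhr]
    exact hchain
  -- rewrite esymmS in terms of p
  have hEm : esymmS n m lam = p m * ((n.choose m : ℕ) : ℝ) :=
    (div_mul_cancel₀ _ hCmpos.ne').symm
  have hE1 : esymmS n 1 lam = p 1 * ((n.choose 1 : ℕ) : ℝ) :=
    (div_mul_cancel₀ _ hC1pos.ne').symm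
  have hEm1 : esymmS n (m-1) lam = p (m-1) * ((n.choose (m-1) : ℕ) : ℝ) :=
    (div_mul_cancel₀ _ hCm1pos.ne').symm
  rw [hEm, hE1, hEm1]
  rw [Real.mul_rpow hpm.le (by positivity), Real.mul_rpow hp1.le (by positivity)]
  have hcollapse : ((n.choose (m-1) : ℕ) : ℝ) * (((n.choose m : ℕ) : ℝ) ^ r *
      ((n.choose 1 : ℕ) : ℝ) ^ tt)⁻¹ * (p m ^ r * ((n.choose m : ℕ) : ℝ) ^ r) *
      (p 1 ^ tt * ((n.choose 1 : ℕ) : ℝ) ^ tt) =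
      ((n.choose (m-1) : ℕ) : ℝ) * (p m ^ r * p 1 ^ tt) := by
    calc ((n.choose (m-1) : ℕ) : ℝ) * (((n.choose m : ℕ) : ℝ) ^ r *
        ((n.choose 1 : ℕ) : ℝ) ^ tt)⁻¹ * (p m ^ r * ((n.choose m : ℕ) : ℝ) ^ r) *
        (p 1 ^ tt * ((n.choose 1 : ℕ) : ℝ) ^ tt)
        = ((n.choose (m-1) : ℕ) : ℝ) * (p m ^ r * p 1 ^ tt) *
          (((n.choose m : ℕ) : ℝ) ^ r * (((n.choose m : ℕ) : ℝ) ^ r)⁻¹) *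
          (((n.choose 1 : ℕ) : ℝ) ^ tt * (((n.choose 1 : ℕ) : ℝ) ^ tt)⁻¹) := by
          rw [mul_inv]; ring
      _ = ((n.choose (m-1) : ℕ) : ℝ) * (p m ^ r * p 1 ^ tt) := by
          rw [mul_inv_cancel₀ hCmr.ne', mul_inv_cancel₀ hC1t.ne', mul_one, mul_one]
  rw [hcollapse]
  calc ((n.choose (m-1) : ℕ) : ℝ) * (p m ^ r * p 1 ^ tt)
      ≤ ((n.choose (m-1) : ℕ) : ℝ) * p (m-1) :=
        mul_le_mul_of_nonneg_left hq hCm1pos.le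
    _ = p (m-1) * ((n.choose (m-1) : ℕ) : ℝ) := mul_comm _ _
end

section
/- For every 1 ≤ m ≤ n, the Gårding cone Γ_m ⊂ ℝ^n is a convex cone: if λ, μ ∈ Γ_m and s, t > 0, then sλ + tμ ∈ Γ_m. In particular Γ_m is a convex subset of ℝ^n. -/
open Finset

/-!
For `λ ∈ Γ_m`, Taylor's formula gives `S_m(λ + s𝟙) = ∑_k binom(n-m+k, k) S_{m-k}(λ) s^k > 0`
for `s ≥ 0`, so `Γ_m` lies in the hyperbolicity cone `Λ_m = {x | S_m(x + s𝟙) > 0 for s ≥ 0}`.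
Since `s ↦ S_m(x + s𝟙)` is a Hasse derivative of `∏ (X + x_i)`, Gauss–Lucas shows that its
roots are real: `S_m` is hyperbolic in the direction `𝟙`. Gårding's argument then shows that
`S_m` is hyperbolic in every direction `v ∈ Λ_m`, and that `S_m(x + v) > 0` for `x, v ∈ Λ_m`.
Both steps follow the roots of a continuous family of polynomials `z ↦ S_m(a + z b)`: while the
leading coefficient `S_m(b)` stays away from zero the roots neither escape to infinity nor jump,
so they cannot enter an open region of `ℂ` without crossing its boundary. Applying this to every
`j ≤ m` in place of `m` gives the theorem.
-/

open Polynomial NNReal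

namespace Polynomial

theorem nnnorm_leadingCoeff_mul_pow_le_nnnorm_eval {p : ℂ[X]} {z : ℂ} {c : ℝ≥0}
    (h : ∀ r ∈ p.roots, c ≤ ‖z - r‖₊) :
    ‖p.leadingCoeff‖₊ * c ^ p.natDegree ≤ ‖p.eval z‖₊ := by
  conv_rhs => rw [← C_leadingCoeff_mul_prod_multiset_X_sub_C (p := p)
    IsAlgClosed.card_roots_eq_natDegree]
  rw [eval_mul, eval_C, eval_multiset_prod, nnnorm_mul, Multiset.map_map,
    ← IsAlgClosed.card_roots_eq_natDegree (p := p)]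
  gcongr
  have hprod := map_multiset_prod (nnnormHom : ℂ →*₀ ℝ≥0) (p.roots.map fun r => z - r)
  simp only [nnnormHom_apply, Multiset.map_map, Function.comp_def] at hprod
  simp only [Function.comp_def, eval_sub, eval_X, eval_C, hprod]
  rw [← Multiset.card_map (fun r => ‖z - r‖₊) p.roots]
  refine Multiset.pow_card_le_prod fun x hx => ?_
  obtain ⟨r, hr, rfl⟩ := Multiset.mem_map.mp hx
  exact h r hr

theorem rootSet_iterate_derivative_subset {P : ℂ[X]} {K : Set ℂ} (hK : Convex ℝ K)
    (hP : P.rootSet ℂ ⊆ K) (k : ℕ) : (derivative^[k] P).rootSet ℂ ⊆ K := by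
  induction k with
  | zero => exact hP
  | succ k ih =>
    rw [Function.iterate_succ_apply']
    rcases lt_or_ge 0 (derivative^[k] P).degree with h | h
    · exact (rootSet_derivative_subset_convexHull_rootSet h).trans (convexHull_min ih hK)
    · rw [eq_C_of_degree_le_zero h, derivative_C, rootSet_zero]
      exact Set.empty_subset _

variable {R T : Type*} [CommSemiring R] [TopologicalSpace R] [IsTopologicalSemiring R]
  [TopologicalSpace T]

theorem continuous_coeff_prod {ι : Type*} (s : Finset ι) {f : ι → T → R[X]}
    (hf : ∀ i ∈ s, ∀ k, Continuous fun t => (f i t).coeff k) (k : ℕ) :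
    Continuous fun t => (∏ i ∈ s, f i t).coeff k := by
  classical
  induction s using Finset.induction_on generalizing k with
  | empty => simpa only [prod_empty] using continuous_const
  | insert a s ha ih =>
    simp_rw [prod_insert ha, coeff_mul]
    exact continuous_finsetSum _ fun p _ =>
      (hf a (by simp) p.1).mul (ih (fun i hi => hf i (by simp [hi])) p.2)

theorem continuous_eval_of_continuous_coeff {P : T → R[X]} {d : ℕ}
    (hcoeff : ∀ k, Continuous fun t => (P t).coeff k) (hdeg : ∀ t, (P t).natDegree ≤ d) :
    Continuous fun q : T × R => (P q.1).eval q.2 := by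
  simp_rw [fun q : T × R => eval_eq_sum_range' (Nat.lt_succ_of_le (hdeg q.1)) q.2]
  exact continuous_finsetSum _ fun k _ =>
    ((hcoeff k).comp continuous_fst).mul (continuous_snd.pow k)

section Family

variable {P : T → ℂ[X]} {d : ℕ} {s : Set T} {U : Set ℂ}

-- Away from the roots `‖lc‖ c ^ d ≤ ‖P z‖`, a closed condition that passes to the limit.
theorem not_isRoot_of_mem_closure (hcoeff : ∀ k, Continuous fun t => (P t).coeff k)
    (hdeg : ∀ t, (P t).natDegree ≤ d) (hU : IsOpen U) {t : T} (hlc : (P t).coeff d ≠ 0)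
    (ht : t ∈ closure {t' | (P t').coeff d ≠ 0 ∧ ∀ z ∈ U, ¬(P t').IsRoot z}) :
    ∀ z ∈ U, ¬(P t).IsRoot z := by
  intro z hz hroot
  obtain ⟨c, hc, hball⟩ := Metric.isOpen_iff.mp hU z hz
  have hclosed : IsClosed {t' | ‖(P t').coeff d‖ * c ^ d ≤ ‖(P t').eval z‖} :=
    isClosed_le ((hcoeff d).norm.mul continuous_const)
      ((continuous_eval_of_continuous_coeff hcoeff hdeg).comp
        (continuous_id.prodMk continuous_const)).norm
  have hsub : {t' | (P t').coeff d ≠ 0 ∧ ∀ z ∈ U, ¬(P t').IsRoot z} ⊆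
      {t' | ‖(P t').coeff d‖ * c ^ d ≤ ‖(P t').eval z‖} := by
    rintro t' ⟨hlc', hU'⟩
    have hlead : (P t').leadingCoeff = (P t').coeff d := by
      rw [leadingCoeff, natDegree_eq_of_le_of_coeff_ne_zero (hdeg t') hlc']
    have key := nnnorm_leadingCoeff_mul_pow_le_nnnorm_eval (p := P t') (z := z)
      (c := ⟨c, hc.le⟩) fun r hr => by
        have hrU : r ∉ U := fun h => hU' r h (isRoot_of_mem_roots hr)
        have : c ≤ dist r z := not_lt.mp fun h => hrU (hball h)
        rw [dist_comm, dist_eq_norm, ← coe_nnnorm] at this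
        exact_mod_cast this
    rw [natDegree_eq_of_le_of_coeff_ne_zero (hdeg t') hlc', hlead] at key
    exact_mod_cast key
  have hle := closure_minimal hsub hclosed ht
  simp only [Set.mem_ofPred_eq, hroot.eq_zero, norm_zero] at hle
  exact (mul_pos (norm_pos_iff.mpr hlc) (pow_pos hc d)).not_ge hle

theorem exists_bound_of_isRoot (hs : IsCompact s)
    (hcoeff : ∀ k, Continuous fun t => (P t).coeff k) (hdeg : ∀ t, (P t).natDegree ≤ d)
    (hlc : ∀ t ∈ s, (P t).coeff d ≠ 0) :
    ∃ R, ∀ t ∈ s, ∀ z, (P t).IsRoot z → ‖z‖ ≤ R := by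
  obtain ⟨R, hR⟩ := hs.exists_bound_of_continuousOn (f := fun t =>
    (∑ k ∈ range d, ‖(P t).coeff k‖) / ‖(P t).coeff d‖ + 1)
    (((continuous_finsetSum _ fun k _ => (hcoeff k).norm).continuousOn.div
      (hcoeff d).norm.continuousOn fun t ht => norm_ne_zero_iff.mpr (hlc t ht)).add
      continuousOn_const)
  refine ⟨R, fun t ht z hz => ?_⟩
  have hdeg' := natDegree_eq_of_le_of_coeff_ne_zero (hdeg t) (hlc t ht)
  have hP : P t ≠ 0 := fun h => hlc t ht (by simp [h])
  have hsup : (range d).sup (fun k => ‖(P t).coeff k‖₊) ≤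
      ∑ k ∈ range d, ‖(P t).coeff k‖₊ :=
    Finset.sup_le fun k hk =>
      Finset.single_le_sum (f := fun k => ‖(P t).coeff k‖₊) (fun _ _ => zero_le) hk
  have hcauchy : cauchyBound (P t) ≤
      (∑ k ∈ range d, ‖(P t).coeff k‖₊) / ‖(P t).coeff d‖₊ + 1 := by
    rw [cauchyBound, hdeg', leadingCoeff, hdeg']
    gcongr
  replace hcauchy : (cauchyBound (P t) : ℝ) ≤
      (∑ k ∈ range d, ‖(P t).coeff k‖) / ‖(P t).coeff d‖ + 1 := by
    simpa using NNReal.coe_le_coe.mpr hcauchy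
  have hroot := hz.norm_lt_cauchyBound hP
  exact (le_of_lt (by exact_mod_cast hroot)).trans (hcauchy.trans ((le_abs_self _).trans (hR t ht)))

variable [T2Space T]

theorem isClosed_setOf_exists_isRoot (hs : IsCompact s)
    (hcoeff : ∀ k, Continuous fun t => (P t).coeff k) (hdeg : ∀ t, (P t).natDegree ≤ d)
    (hlc : ∀ t ∈ s, (P t).coeff d ≠ 0) {K : Set ℂ} (hK : IsClosed K) :
    IsClosed {t | t ∈ s ∧ ∃ z ∈ K, (P t).IsRoot z} := by
  obtain ⟨R, hR⟩ := exists_bound_of_isRoot hs hcoeff hdeg hlc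
  have hcompact :
      IsCompact ((s ×ˢ (K ∩ Metric.closedBall 0 R)) ∩ {q | (P q.1).eval q.2 = 0}) :=
    (hs.prod ((isCompact_closedBall 0 R).inter_left hK)).inter_right
      (isClosed_eq (continuous_eval_of_continuous_coeff hcoeff hdeg) continuous_const)
  convert (hcompact.image continuous_fst).isClosed using 1
  ext t
  constructor
  · rintro ⟨ht, z, hzK, hz⟩
    exact ⟨(t, z), ⟨⟨ht, hzK, mem_closedBall_zero_iff.mpr (hR t ht z hz)⟩, hz⟩, rfl⟩
  · rintro ⟨⟨t, z⟩, ⟨⟨ht, hzK, -⟩, hz⟩, rfl⟩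
    exact ⟨ht, z, hzK, hz⟩

theorem forall_not_isRoot_of_isPreconnected (hs : IsCompact s) (hs' : IsPreconnected s)
    (hcoeff : ∀ k, Continuous fun t => (P t).coeff k) (hdeg : ∀ t, (P t).natDegree ≤ d)
    (hlc : ∀ t ∈ s, (P t).coeff d ≠ 0) (hU : IsOpen U)
    (hfr : ∀ t ∈ s, ∀ z ∈ frontier U, ¬(P t).IsRoot z) {t₀ : T} (ht₀ : t₀ ∈ s)
    (h₀ : ∀ z ∈ U, ¬(P t₀).IsRoot z) :
    ∀ t ∈ s, ∀ z ∈ U, ¬(P t).IsRoot z := by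
  intro t ht z hz hroot
  set G := {t' | (P t').coeff d ≠ 0 ∧ ∀ z ∈ U, ¬(P t').IsRoot z}
  have hcover : s ⊆ {t | t ∈ s ∧ ∃ z ∈ closure U, (P t).IsRoot z} ∪ closure G := by
    intro t ht
    by_cases h : ∃ z ∈ U, (P t).IsRoot z
    · obtain ⟨z, hz, hroot⟩ := h
      exact Or.inl ⟨ht, z, subset_closure hz, hroot⟩
    · push Not at h
      exact Or.inr (subset_closure ⟨hlc t ht, h⟩)
  obtain ⟨t', ht', ⟨-, w, hw, hwroot⟩, hG⟩ := isPreconnected_closed_iff.mp hs' _ _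
    (isClosed_setOf_exists_isRoot hs hcoeff hdeg hlc isClosed_closure) isClosed_closure hcover
    ⟨t, ht, ht, z, subset_closure hz, hroot⟩
    ⟨t₀, ht₀, subset_closure ⟨hlc t₀ ht₀, h₀⟩⟩
  by_cases hwU : w ∈ U
  · exact not_isRoot_of_mem_closure hcoeff hdeg hU (hlc t' ht') hG w hwU hwroot
  · exact hfr t' ht' w ⟨hw, by rwa [hU.interior_eq]⟩ hwroot

end Family

end Polynomial

noncomputable def esymmFn {R : Type*} [CommSemiring R] (n m : ℕ) (a : Fin n → R) : R :=
  ∑ s ∈ univ.powersetCard m, ∏ i ∈ s, a i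

section Esymm

variable {R S : Type*} [CommSemiring R] [CommSemiring S] {n m : ℕ}

theorem esymmS_eq_esymmFn (x : Fin n → ℝ) : esymmS n m x = esymmFn n m x := rfl

@[simp]
theorem esymmFn_zero (a : Fin n → R) : esymmFn n 0 a = 1 := by
  simp [esymmFn]

theorem map_esymmFn (f : R →+* S) (a : Fin n → R) :
    f (esymmFn n m a) = esymmFn n m (fun i => f (a i)) := by
  simp [esymmFn, map_sum, map_prod]

theorem esymmFn_mul_left (c : R) (a : Fin n → R) :
    esymmFn n m (fun i => c * a i) = c ^ m * esymmFn n m a := by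
  rw [esymmFn, esymmFn, mul_sum]
  refine sum_congr rfl fun s hs => ?_
  rw [prod_mul_distrib, prod_const, (mem_powersetCard_univ.mp hs)]

theorem esymmFn_const (c : R) : esymmFn n m (fun _ => c) = n.choose m * c ^ m := by
  rw [esymmFn, sum_congr rfl fun s hs => by rw [prod_const, mem_powersetCard_univ.mp hs],
    sum_const, card_powersetCard, card_univ, Fintype.card_fin, nsmul_eq_mul]

theorem coeff_prod_X_add_C (y : Fin n → R) {k : ℕ} (hk : k ≤ n) :
    (∏ i, (X + C (y i))).coeff k = esymmFn n (n - k) y := by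
  rw [prod_X_add_C_coeff _ _ (by simpa using hk), card_univ, Fintype.card_fin]
  rfl

theorem eval_hasseDeriv_prod_X_add_C (hmn : m ≤ n) (y : Fin n → R) (w : R) :
    (hasseDeriv (n - m) (∏ i, (X + C (y i)))).eval w = esymmFn n m (fun i => y i + w) := by
  have hshift : ∀ i, (X + C (y i)).comp (X + C w) = X + C (y i + w) := fun i => by
    simp only [add_comp, X_comp, C_comp, C_add]
    ring
  rw [← taylor_coeff, taylor_apply, Polynomial.prod_comp]
  simp_rw [hshift]
  rw [coeff_prod_X_add_C _ (Nat.sub_le n m), Nat.sub_sub_self hmn]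

theorem coeff_hasseDeriv_prod_X_add_C (hmn : m ≤ n) (y : Fin n → R) {k : ℕ} (hk : k ≤ m) :
    (hasseDeriv (n - m) (∏ i, (X + C (y i)))).coeff k =
      (k + (n - m)).choose (n - m) * esymmFn n (m - k) y := by
  rw [hasseDeriv_coeff, coeff_prod_X_add_C y (by omega)]
  congr 2
  omega

theorem natDegree_hasseDeriv_prod_X_add_C_le (y : Fin n → R) :
    (hasseDeriv (n - m) (∏ i, (X + C (y i)))).natDegree ≤ m := by
  have hprod : (∏ i, (X + C (y i))).natDegree ≤ n :=
    (natDegree_prod_le _ _).trans <| (sum_le_card_nsmul _ _ 1 fun i _ =>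
      (natDegree_add_le _ _).trans (by simp [natDegree_X_le])).trans (by simp)
  have := natDegree_hasseDeriv_le (∏ i, (X + C (y i))) (n - m)
  omega

end Esymm

section LinePoly

variable {R T : Type*} [CommSemiring R] {n m : ℕ}

noncomputable def linePoly (n m : ℕ) (a b : Fin n → R) : R[X] :=
  ∑ s ∈ univ.powersetCard m, ∏ i ∈ s, (C (b i) * X + C (a i))

theorem eval_linePoly (a b : Fin n → R) (z : R) :
    (linePoly n m a b).eval z = esymmFn n m (fun i => a i + z * b i) := by
  simp only [linePoly, esymmFn, eval_finsetSum, eval_prod, eval_add, eval_mul, eval_C, eval_X]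
  exact sum_congr rfl fun s _ => prod_congr rfl fun i _ => by ring

theorem natDegree_linePoly_le (a b : Fin n → R) : (linePoly n m a b).natDegree ≤ m :=
  natDegree_sum_le_of_forall_le _ _ fun s hs => (natDegree_prod_le _ _).trans <|
    (sum_le_card_nsmul _ _ 1 fun _ _ => natDegree_linear_le).trans
      (by simp [mem_powersetCard_univ.mp hs])

theorem coeff_linePoly_self (a b : Fin n → R) : (linePoly n m a b).coeff m = esymmFn n m b := by
  rw [linePoly, finsetSum_coeff, esymmFn]
  refine sum_congr rfl fun s hs => ?_
  have := coeff_prod_of_natDegree_le (s := s) (fun i => C (b i) * X + C (a i)) 1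
    fun _ _ => natDegree_linear_le
  rw [mul_one, mem_powersetCard_univ.mp hs] at this
  simp [this]

theorem continuous_coeff_linePoly [TopologicalSpace R] [IsTopologicalSemiring R]
    [TopologicalSpace T] {a b : T → Fin n → R} (ha : Continuous a) (hb : Continuous b)
    (k : ℕ) :
    Continuous fun t => (linePoly n m (a t) (b t)).coeff k := by
  simp_rw [linePoly, finsetSum_coeff]
  refine continuous_finsetSum _ fun s _ => continuous_coeff_prod s (fun i _ j => ?_) k
  simp only [coeff_add, coeff_C_mul_X, coeff_C]
  split_ifs <;> fun_prop

end LinePoly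

def hyperbolicityCone (n m : ℕ) : Set (Fin n → ℝ) :=
  {x | ∀ s : ℝ, 0 ≤ s → 0 < esymmS n m (fun i => x i + s)}

namespace hyperbolicityCone

variable {n m : ℕ} {x v : Fin n → ℝ}

theorem esymmS_pos (hx : x ∈ hyperbolicityCone n m) : 0 < esymmS n m x := by
  simpa using hx 0 le_rfl

theorem add_const_mem (hx : x ∈ hyperbolicityCone n m) {c : ℝ} (hc : 0 ≤ c) :
    (fun i => x i + c) ∈ hyperbolicityCone n m := fun s hs => by
  simpa [add_assoc] using hx (c + s) (by positivity)

theorem smul_mem (hx : x ∈ hyperbolicityCone n m) {c : ℝ} (hc : 0 < c) :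
    (fun i => c * x i) ∈ hyperbolicityCone n m := fun s hs => by
  have hshift : (fun i => c * x i + s) = fun i => c * (x i + s / c) := by
    funext i
    field_simp
  rw [hshift, esymmS_eq_esymmFn, esymmFn_mul_left]
  exact mul_pos (pow_pos hc m) (hx _ (by positivity))

theorem one_mem (hmn : m ≤ n) : (fun _ => 1) ∈ hyperbolicityCone n m := fun s hs => by
  rw [esymmS_eq_esymmFn, esymmFn_const]
  have := Nat.choose_pos hmn
  positivity

theorem one_sub_add_mul_mem (hmn : m ≤ n) (hv : v ∈ hyperbolicityCone n m) {θ : ℝ}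
    (hθ : θ ∈ Set.Icc (0 : ℝ) 1) :
    (fun i => (1 - θ) + θ * v i) ∈ hyperbolicityCone n m := by
  rcases hθ.1.eq_or_lt with rfl | hpos
  · simpa using one_mem hmn
  · have hshift : (fun i => (1 - θ) + θ * v i) = fun i => θ * (v i + (1 - θ) / θ) := by
      funext i
      field_simp
      ring
    rw [hshift]
    exact smul_mem (add_const_mem hv (div_nonneg (by linarith [hθ.2]) hpos.le)) hpos

end hyperbolicityCone

theorem GammaCone.esymmS_pos {n m j : ℕ} {x : Fin n → ℝ} (hx : GammaCone n m x)
    (hj : j ≤ m) : 0 < esymmS n j x := by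
  rcases Nat.eq_zero_or_pos j with rfl | hj0
  · simp [esymmS_eq_esymmFn]
  · exact hx j hj0 hj

theorem GammaCone.mem_hyperbolicityCone {n m : ℕ} {x : Fin n → ℝ} (hmn : m ≤ n)
    (hx : GammaCone n m x) : x ∈ hyperbolicityCone n m := by
  intro s hs
  rw [esymmS_eq_esymmFn, ← eval_hasseDeriv_prod_X_add_C hmn,
    eval_eq_sum_range' (Nat.lt_succ_of_le (natDegree_hasseDeriv_prod_X_add_C_le x))]
  refine sum_pos' (fun k hk => ?_) ⟨0, by simp, ?_⟩
  · rw [coeff_hasseDeriv_prod_X_add_C hmn x (Nat.lt_succ_iff.mp (mem_range.mp hk))]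
    have := (hx.esymmS_pos (Nat.sub_le m k)).le
    positivity
  · rw [coeff_hasseDeriv_prod_X_add_C hmn x (Nat.zero_le m)]
    have := hx.esymmS_pos le_rfl
    have := Nat.choose_pos (Nat.le_add_left (n - m) 0)
    simp only [Nat.sub_zero, pow_zero, mul_one]
    positivity

section Hyperbolicity

open Complex ComplexConjugate

variable {n m : ℕ}

theorem esymmFn_ofReal (x : Fin n → ℝ) : esymmFn n m (fun i => (x i : ℂ)) = esymmS n m x :=
  (map_esymmFn ofRealHom x).symm

theorem im_eq_zero_of_esymmFn_add_eq_zero (hmn : m ≤ n) (y : Fin n → ℝ) {w : ℂ}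
    (h : esymmFn n m (fun i => (y i : ℂ) + w) = 0) : w.im = 0 := by
  set p : ℂ[X] := ∏ i, (X + C (y i : ℂ))
  have hK : Convex ℝ {z : ℂ | z.im = 0} := (LinearMap.ker imLm).convex
  have hp : p.rootSet ℂ ⊆ {z : ℂ | z.im = 0} := by
    intro z hz
    rw [mem_rootSet, coe_aeval_eq_eval] at hz
    simp only [p, eval_prod, eval_add, eval_X, eval_C, prod_eq_zero_iff] at hz
    obtain ⟨i, -, hi⟩ := hz.2
    simpa using congrArg im (eq_neg_of_add_eq_zero_left hi)
  have hq : hasseDeriv (n - m) p ≠ 0 := fun h0 => by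
    have := coeff_hasseDeriv_prod_X_add_C hmn (fun i => (y i : ℂ)) le_rfl
    rw [h0, coeff_zero, Nat.sub_self, esymmFn_zero, mul_one] at this
    exact (Nat.choose_pos (Nat.le_add_left _ _)).ne' (by exact_mod_cast this.symm)
  have hw : w ∈ (derivative^[n - m] p).rootSet ℂ := by
    rw [← factorial_smul_hasseDeriv, LinearMap.smul_apply, mem_rootSet, coe_aeval_eq_eval,
      eval_smul, eval_hasseDeriv_prod_X_add_C hmn, h,
      smul_zero]
    exact ⟨smul_ne_zero (Nat.factorial_ne_zero _) hq, rfl⟩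
  exact p.rootSet_iterate_derivative_subset hK hp _ hw

theorem hyperbolicityCone.neg_of_esymmFn_add_eq_zero (hmn : m ≤ n) {v : Fin n → ℝ}
    (hv : v ∈ hyperbolicityCone n m) {w : ℂ} (h : esymmFn n m (fun i => (v i : ℂ) + w) = 0) :
    w.im = 0 ∧ w.re < 0 := by
  have him := im_eq_zero_of_esymmFn_add_eq_zero hmn v h
  refine ⟨him, not_le.mp fun hre => (hv w.re hre).ne' ?_⟩
  rw [← ofReal_inj, ← esymmFn_ofReal, ofReal_zero, ← h]
  congr 1
  funext i
  apply Complex.ext <;> simp [him]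

-- Deform `τ x` from `0` to `x`. The shift `t i 𝟙` keeps the roots off the real axis
-- (hyperbolicity in `𝟙`), and for `τ = 0` the roots are `t i / r` with `r < 0`.
theorem esymmFn_add_mul_I_ne_zero (hmn : m ≤ n) {v : Fin n → ℝ}
    (hv : v ∈ hyperbolicityCone n m) (x : Fin n → ℝ) {t : ℝ} (ht : 0 < t) {z : ℂ} (hz : 0 < z.im) :
    esymmFn n m (fun i => (x i + t * I) + z * v i) ≠ 0 := by
  set P : ℝ → ℂ[X] := fun τ =>
    linePoly n m (fun i => τ * x i + t * I) (fun i => (v i : ℂ))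
  have hlc : ∀ τ ∈ Set.Icc (0 : ℝ) 1, (P τ).coeff m ≠ 0 := fun τ _ => by
    rw [coeff_linePoly_self, esymmFn_ofReal]
    exact_mod_cast (hyperbolicityCone.esymmS_pos hv).ne'
  have hfr : ∀ τ ∈ Set.Icc (0 : ℝ) 1, ∀ w ∈ frontier {w : ℂ | 0 < w.im},
      ¬(P τ).IsRoot w := by
    intro τ _ w hw hroot
    have hw0 : w.im = 0 := (frontier_lt_subset_eq continuous_const continuous_im hw).symm
    rw [IsRoot, eval_linePoly] at hroot
    have hreal : esymmFn n m (fun i => ((τ * x i + w.re * v i : ℝ) : ℂ) + t * I) = 0 := by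
      rw [← hroot]
      congr 1
      funext i
      apply Complex.ext <;> simp [hw0]
    simpa [ht.ne'] using im_eq_zero_of_esymmFn_add_eq_zero hmn _ hreal
  have h₀ : ∀ w ∈ {w : ℂ | 0 < w.im}, ¬(P 0).IsRoot w := by
    intro w hw hroot
    have hw0 : w ≠ 0 := fun h => by simp [h] at hw
    have hscale : (fun i => ((0 : ℝ) : ℂ) * x i + t * I + w * v i) =
        fun i => w * ((v i : ℂ) + t * I / w) := by
      funext i
      rw [ofReal_zero, zero_mul, zero_add, mul_add, mul_div_cancel₀ _ hw0, add_comm]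
    rw [IsRoot, eval_linePoly, hscale, esymmFn_mul_left] at hroot
    obtain ⟨him, hre⟩ := hyperbolicityCone.neg_of_esymmFn_add_eq_zero hmn hv
      ((mul_eq_zero.mp hroot).resolve_left (pow_ne_zero _ hw0))
    have hti : t * I = (t * I / w) * w := by field_simp
    have := congrArg im hti
    simp only [mul_im, ofReal_re, I_im, ofReal_im, I_re, him] at this
    nlinarith [mul_neg_of_neg_of_pos hre (show 0 < w.im from hw)]
  intro h
  refine forall_not_isRoot_of_isPreconnected isCompact_Icc isPreconnected_Icc
    (continuous_coeff_linePoly (by fun_prop) (by fun_prop)) (fun τ => natDegree_linePoly_le _ _)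
    hlc (isOpen_lt continuous_const continuous_im) hfr (Set.left_mem_Icc.2 zero_le_one) h₀
    1 (Set.right_mem_Icc.2 zero_le_one) z hz ?_
  rw [IsRoot, eval_linePoly]
  simpa using h

-- Let `t → 0` in `esymmFn_add_mul_I_ne_zero`.
theorem esymmFn_ne_zero_of_im_ne_zero (hmn : m ≤ n) {v : Fin n → ℝ}
    (hv : v ∈ hyperbolicityCone n m) (x : Fin n → ℝ) {z : ℂ} (hz : z.im ≠ 0) :
    esymmFn n m (fun i => x i + z * v i) ≠ 0 := by
  wlog hpos : 0 < z.im generalizing z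
  · intro h
    refine this (z := conj z) (by simpa using hz)
      (by simpa using lt_of_le_of_ne (not_lt.mp hpos) hz) ?_
    have hconj := map_esymmFn (m := m) (starRingEnd ℂ) (fun i => (x i : ℂ) + z * v i)
    rw [h, map_zero] at hconj
    simpa using hconj.symm
  set P : ℝ → ℂ[X] := fun α => linePoly n m (fun i => x i + α * I) (fun i => (v i : ℂ))
  have hlc : ∀ α, (P α).coeff m ≠ 0 := fun α => by
    rw [coeff_linePoly_self, esymmFn_ofReal]
    exact_mod_cast (hyperbolicityCone.esymmS_pos hv).ne'
  have hG : Set.Ioi (0 : ℝ) ⊆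
      {α | (P α).coeff m ≠ 0 ∧ ∀ w ∈ {w : ℂ | 0 < w.im}, ¬(P α).IsRoot w} :=
    fun α hα => ⟨hlc α, fun w hw hroot => esymmFn_add_mul_I_ne_zero hmn hv x hα hw
      (by rwa [IsRoot, eval_linePoly] at hroot)⟩
  intro h
  refine not_isRoot_of_mem_closure (P := P) (d := m)
    (continuous_coeff_linePoly (by fun_prop) (by fun_prop))
    (fun α => natDegree_linePoly_le _ _) (isOpen_lt continuous_const continuous_im) (hlc 0)
    (closure_mono hG (by simp)) z hpos ?_
  rw [IsRoot, eval_linePoly]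
  simpa using h

-- Deform the direction from `𝟙` to `v`: all roots stay real by hyperbolicity, and they never
-- pass through `0` because `S_m(x) > 0`, so none of them can become positive.
theorem hyperbolicityCone.esymmS_add_mul_ne_zero (hmn : m ≤ n) {x v : Fin n → ℝ}
    (hx : x ∈ hyperbolicityCone n m) (hv : v ∈ hyperbolicityCone n m) {c : ℝ} (hc : 0 < c) :
    esymmS n m (fun i => x i + c * v i) ≠ 0 := by
  set V : ℝ → Fin n → ℝ := fun θ i => (1 - θ) + θ * v i
  have hV : ∀ θ ∈ Set.Icc (0 : ℝ) 1, V θ ∈ hyperbolicityCone n m := fun θ hθ =>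
    one_sub_add_mul_mem hmn hv hθ
  set P : ℝ → ℂ[X] := fun θ => linePoly n m (fun i => (x i : ℂ)) (fun i => (V θ i : ℂ))
  have hPreal : ∀ θ (r : ℝ),
      (P θ).eval (r : ℂ) = esymmS n m (fun i => x i + r * V θ i) := by
    intro θ r
    rw [eval_linePoly, ← esymmFn_ofReal]
    push_cast
    rfl
  have hroot : ∀ θ ∈ Set.Icc (0 : ℝ) 1, ∀ w, (P θ).IsRoot w →
      esymmS n m (fun i => x i + w.re * V θ i) = 0 := by
    intro θ hθ w hw
    have him : w.im = 0 := by
      by_contra h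
      exact esymmFn_ne_zero_of_im_ne_zero hmn (hV θ hθ) x h (by rwa [IsRoot, eval_linePoly] at hw)
    rw [IsRoot, ← re_add_im w, him, ofReal_zero, zero_mul, add_zero, hPreal] at hw
    exact_mod_cast hw
  have hlc : ∀ θ ∈ Set.Icc (0 : ℝ) 1, (P θ).coeff m ≠ 0 := fun θ hθ => by
    rw [coeff_linePoly_self, esymmFn_ofReal]
    exact_mod_cast (esymmS_pos (hV θ hθ)).ne'
  have hfr : ∀ θ ∈ Set.Icc (0 : ℝ) 1, ∀ w ∈ frontier {w : ℂ | 0 < w.re},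
      ¬(P θ).IsRoot w := by
    intro θ hθ w hw hw'
    have hre : w.re = 0 := (frontier_lt_subset_eq continuous_const continuous_re hw).symm
    have := hroot θ hθ w hw'
    simp only [hre, zero_mul, add_zero] at this
    exact (esymmS_pos hx).ne' this
  have h₀ : ∀ w ∈ {w : ℂ | 0 < w.re}, ¬(P 0).IsRoot w := by
    intro w hw hw'
    have := hroot 0 (Set.left_mem_Icc.2 zero_le_one) w hw'
    simp only [V, sub_zero, zero_mul, add_zero, mul_one] at this
    exact (hx w.re (le_of_lt hw)).ne' this
  intro h
  refine forall_not_isRoot_of_isPreconnected (P := P) (d := m) isCompact_Icc isPreconnected_Icc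
    (continuous_coeff_linePoly (by fun_prop) (by fun_prop)) (fun θ => natDegree_linePoly_le _ _)
    hlc (isOpen_lt continuous_const continuous_re) hfr (Set.left_mem_Icc.2 zero_le_one) h₀
    1 (Set.right_mem_Icc.2 zero_le_one) c (by simpa using hc) ?_
  rw [IsRoot, hPreal]
  simpa [V] using h

theorem hyperbolicityCone.esymmS_add_pos (hmn : m ≤ n) {x v : Fin n → ℝ}
    (hx : x ∈ hyperbolicityCone n m) (hv : v ∈ hyperbolicityCone n m) :
    0 < esymmS n m (fun i => x i + v i) := by
  have hcont : Continuous fun c : ℝ => esymmS n m (fun i => x i + c * v i) := by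
    unfold esymmS
    fun_prop
  by_contra hle
  obtain ⟨c, hc, hc0⟩ := intermediate_value_Icc' zero_le_one hcont.continuousOn
    ⟨by simpa using not_lt.mp hle, by simpa using (esymmS_pos hx).le⟩
  rcases hc.1.eq_or_lt with rfl | hpos
  · exact (esymmS_pos hx).ne' (by simpa using hc0)
  · exact esymmS_add_mul_ne_zero hmn hx hv hpos hc0

end Hyperbolicity

theorem gamma_convex_cone_general (n m : ℕ) (hmn : m ≤ n) :
    (∀ lam mu : Fin n → ℝ, GammaCone n m lam → GammaCone n m mu →
      ∀ s t : ℝ, 0 < s → 0 < t → GammaCone n m (fun i => s * lam i + t * mu i)) ∧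
    Convex ℝ {lam : Fin n → ℝ | GammaCone n m lam} := by
  have cone : ∀ lam mu : Fin n → ℝ, GammaCone n m lam → GammaCone n m mu →
      ∀ s t : ℝ, 0 < s → 0 < t → GammaCone n m (fun i => s * lam i + t * mu i) := by
    intro lam mu hlam hmu s t hs ht j hj hjm
    have hjn := hjm.trans hmn
    have mem : ∀ x, GammaCone n m x → x ∈ hyperbolicityCone n j := fun x hx =>
      GammaCone.mem_hyperbolicityCone hjn fun k hk hkj => hx k hk (hkj.trans hjm)
    exact hyperbolicityCone.esymmS_add_pos hjn (hyperbolicityCone.smul_mem (mem lam hlam) hs)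
      (hyperbolicityCone.smul_mem (mem mu hmu) ht)
  exact ⟨cone, convex_iff_forall_pos.mpr fun a ha b hb p q hp hq _ => cone a b ha hb p q hp hq⟩

/-- The Gårding cone is a convex cone. -/
theorem gamma_convex_cone (n m : ℕ) (hm : 1 ≤ m) (hmn : m ≤ n) :
    (∀ lam mu : Fin n → ℝ, GammaCone n m lam → GammaCone n m mu →
      ∀ s t : ℝ, 0 < s → 0 < t → GammaCone n m (fun i => s * lam i + t * mu i)) ∧
    Convex ℝ {lam : Fin n → ℝ | GammaCone n m lam} :=
  gamma_convex_cone_general n m hmn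
end

section
/- For every 1 ≤ m ≤ n, the function λ ↦ S_m(λ)^{1/m} is concave on Γ_m: for all λ, μ ∈ Γ_m and t ∈ [0,1], S_m(tλ + (1−t)μ)^{1/m} ≥ t·S_m(λ)^{1/m} + (1−t)·S_m(μ)^{1/m}. (Note that tλ + (1−t)μ ∈ Γ_m since Γ_m is convex.) -/
open Finset

/-!
Gårding's theory of hyperbolic polynomials, specialised to `S_m`. Up to a constant,
`t ↦ S_m(y + t𝟙)` is the `(n - m)`-th derivative of `∏ (t + yᵢ)`, so by Rolle's theorem it has
only real roots: `S_m` is hyperbolic in the direction `𝟙`. As `Γ_m` is a cone invariant under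
adding nonnegative multiples of `𝟙`, the segment from `λ ∈ Γ_m` to `𝟙` stays in `Γ_m`. Moving the
direction `d` along it, the roots of `ζ ↦ S_m(x + iε𝟙 + ζd)` (`x` real, `ε > 0`) never meet the
real axis, and for `d = 𝟙` they lie in the lower half plane; by continuity of the roots they do so
for `d = λ`, and letting `ε → 0`, `ζ ↦ S_m(x + ζλ)` has only real roots. The same argument with the
imaginary axis shows that for `λ, μ ∈ Γ_m` these roots are negative, so that
`S_m(μ + sλ) = S_m(λ) ∏ (s + tᵢ)` with all `tᵢ > 0`. Comparing `s = 0` with `s = 1` through AM-GM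
gives `S_m(λ)^{1/m} + S_m(μ)^{1/m} ≤ S_m(λ + μ)^{1/m}`, and concavity follows by homogeneity.
-/

lemma Finset.sum_powersetCard_succ_sum_erase {α M : Type*} [Fintype α] [DecidableEq α]
    [AddCommMonoid M] (k : ℕ) (g : Finset α → M) :
    ∑ s ∈ univ.powersetCard (k + 1), ∑ a ∈ s, g (s.erase a)
      = (Fintype.card α - k) • ∑ A ∈ univ.powersetCard k, g A := by
  have hpairs : ∑ s ∈ univ.powersetCard (k + 1), ∑ a ∈ s, g (s.erase a)
      = ∑ A ∈ univ.powersetCard k, ∑ _a ∈ univ \ A, g A := by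
    rw [sum_sigma', sum_sigma']
    refine sum_nbij' (fun p => ⟨p.1.erase p.2, p.2⟩) (fun q => ⟨insert q.2 q.1, q.2⟩)
      ?_ ?_ ?_ ?_ fun _ _ => rfl
    · rintro ⟨s, a⟩ hp
      rw [mem_sigma, mem_powersetCard_univ] at hp
      simp [card_erase_of_mem hp.2, hp.1]
    · rintro ⟨A, a⟩ hq
      rw [mem_sigma, mem_powersetCard_univ, Finset.mem_sdiff] at hq
      simp [card_insert_of_notMem hq.2.2, hq.1]
    · rintro ⟨s, a⟩ hp
      simp [insert_erase (mem_sigma.mp hp).2]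
    · rintro ⟨A, a⟩ hq
      simp [erase_insert (Finset.mem_sdiff.mp (mem_sigma.mp hq).2).2]
  rw [hpairs, smul_sum]
  refine sum_congr rfl fun A hA => ?_
  rw [sum_const, card_univ_sdiff, (mem_powersetCard_univ.mp hA)]

lemma Multiset.exists_fin_map_eq {α : Type*} {m : ℕ} (s : Multiset α)
    (hs : Multiset.card s = m) : ∃ z : Fin m → α, univ.val.map z = s := by
  obtain ⟨l, rfl⟩ : ∃ l : List α, (l : Multiset α) = s := ⟨s.toList, s.coe_toList⟩
  rw [Multiset.coe_card] at hs
  subst hs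
  exact ⟨l.get, by rw [Fin.univ_val_map, List.ofFn_get]⟩

lemma Complex.ofReal_comp_smul {α : Type*} (r : ℝ) (f : α → ℝ) :
    ofReal ∘ (r • f) = (r : ℂ) • (ofReal ∘ f) := by
  ext
  simp

lemma Complex.ofReal_comp_one {α : Type*} : ofReal ∘ (1 : α → ℝ) = 1 := by
  ext
  simp

lemma Real.geom_mean_add_geom_mean_le_geom_mean_add {ι : Type*} (s : Finset ι)
    {w a b : ι → ℝ} (hw : ∀ i ∈ s, 0 ≤ w i) (hw1 : ∑ i ∈ s, w i = 1) (ha : ∀ i ∈ s, 0 < a i)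
    (hb : ∀ i ∈ s, 0 < b i) :
    ∏ i ∈ s, a i ^ w i + ∏ i ∈ s, b i ^ w i ≤ ∏ i ∈ s, (a i + b i) ^ w i := by
  have hab : ∀ i ∈ s, 0 < a i + b i := fun i hi => add_pos (ha i hi) (hb i hi)
  have hmean : ∀ c : ι → ℝ, (∀ i ∈ s, 0 < c i) →
      (∏ i ∈ s, c i ^ w i) / ∏ i ∈ s, (a i + b i) ^ w i ≤ ∑ i ∈ s, w i * (c i / (a i + b i)) :=
    fun c hc => by
      rw [← prod_div_distrib]
      calc _ = ∏ i ∈ s, (c i / (a i + b i)) ^ w i :=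
            prod_congr rfl fun i hi => (Real.div_rpow (hc i hi).le (hab i hi).le _).symm
        _ ≤ _ := Real.geom_mean_le_arith_mean_weighted s w _ hw hw1
            fun i hi => div_nonneg (hc i hi).le (hab i hi).le
  have hsplit : ∑ i ∈ s, w i * (a i / (a i + b i)) + ∑ i ∈ s, w i * (b i / (a i + b i)) = 1 := by
    rw [← sum_add_distrib, ← hw1]
    refine sum_congr rfl fun i hi => ?_
    field_simp [(hab i hi).ne']
  have hpos : 0 < ∏ i ∈ s, (a i + b i) ^ w i :=
    prod_pos fun i hi => Real.rpow_pos_of_pos (hab i hi) _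
  rw [← div_le_one hpos, add_div]
  linarith [hmean a ha, hmean b hb]

namespace Garding

open Polynomial Filter Topology Complex ComplexConjugate

variable {n : ℕ}

section CommSemiring

variable {R : Type*} [CommSemiring R]

def esymm (m : ℕ) (v : Fin n → R) : R :=
  ∑ s ∈ univ.powersetCard m, ∏ i ∈ s, v i

lemma esymmS_eq_esymm (m : ℕ) : esymmS n m = esymm m := rfl

lemma esymm_smul (m : ℕ) (c : R) (v : Fin n → R) : esymm m (c • v) = c ^ m * esymm m v := by
  rw [esymm, esymm, mul_sum]
  refine sum_congr rfl fun s hs => ?_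
  rw [← (mem_powersetCard_univ.mp hs), ← prod_const, ← prod_mul_distrib]
  rfl

lemma map_esymm {S : Type*} [CommSemiring S] (f : R →+* S) (m : ℕ) (v : Fin n → R) :
    f (esymm m v) = esymm m (f ∘ v) := by
  simp [esymm, map_sum, map_prod]

lemma esymm_one (m : ℕ) : esymm m (1 : Fin n → R) = n.choose m := by
  simp [esymm]

noncomputable def linePoly (m : ℕ) (v u : Fin n → R) : R[X] :=
  ∑ s ∈ univ.powersetCard m, ∏ i ∈ s, (C (u i) * X + C (v i))

lemma eval_linePoly (m : ℕ) (v u : Fin n → R) (ζ : R) :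
    (linePoly m v u).eval ζ = esymm m (v + ζ • u) := by
  simp only [linePoly, esymm, eval_finsetSum, eval_prod]
  refine sum_congr rfl fun s _ => prod_congr rfl fun i _ => ?_
  simp only [eval_add, eval_mul, eval_C, eval_X, Pi.add_apply, Pi.smul_apply, smul_eq_mul]
  ring

lemma map_linePoly {S : Type*} [CommSemiring S] (f : R →+* S) (m : ℕ) (v u : Fin n → R) :
    (linePoly m v u).map f = linePoly m (f ∘ v) (f ∘ u) := by
  simp [linePoly, Polynomial.map_sum, Polynomial.map_prod]

lemma natDegree_linePoly_le (m : ℕ) (v u : Fin n → R) : (linePoly m v u).natDegree ≤ m := by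
  refine natDegree_sum_le_of_forall_le _ _ fun s hs => ?_
  rw [← (mem_powersetCard_univ.mp hs)]
  refine (natDegree_prod_le _ _).trans ?_
  simpa using sum_le_sum fun i (_ : i ∈ s) => natDegree_linear_le (a := u i) (b := v i)

lemma coeff_linePoly_self (m : ℕ) (v u : Fin n → R) : (linePoly m v u).coeff m = esymm m u := by
  rw [linePoly, finsetSum_coeff]
  refine sum_congr rfl fun s hs => ?_
  have h := coeff_prod_of_natDegree_le (s := s) (fun i => C (u i) * X + C (v i)) 1
    fun i _ => natDegree_linear_le
  rw [mul_one, mem_powersetCard_univ.mp hs] at h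
  simpa using h

lemma natDegree_linePoly (v : Fin n → R) {u : Fin n → R} {m : ℕ} (hu : esymm m u ≠ 0) :
    (linePoly m v u).natDegree = m :=
  (natDegree_linePoly_le m v u).antisymm
    (le_natDegree_of_ne_zero ((coeff_linePoly_self m v u).trans_ne hu))

lemma leadingCoeff_linePoly (v : Fin n → R) {u : Fin n → R} {m : ℕ} (hu : esymm m u ≠ 0) :
    (linePoly m v u).leadingCoeff = esymm m u := by
  rw [leadingCoeff, natDegree_linePoly v hu, coeff_linePoly_self]

lemma derivative_linePoly_one (k : ℕ) (y : Fin n → R) :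
    derivative (linePoly (k + 1) y 1) = (n - k) • linePoly k y 1 := by
  simp only [linePoly, derivative_sum, derivative_prod_finset, Pi.one_apply, map_one, one_mul,
    derivative_add, derivative_X, derivative_C, add_zero, mul_one]
  simpa only [Fintype.card_fin] using
    sum_powersetCard_succ_sum_erase k fun A : Finset (Fin n) => ∏ i ∈ A, (X + C (y i))

lemma continuous_esymm [TopologicalSpace R] [IsTopologicalSemiring R] (m : ℕ) :
    Continuous (esymm m : (Fin n → R) → R) := by
  unfold esymm
  fun_prop

end CommSemiring

lemma exists_esymm_add_smul_eq_prod {K : Type*} [Field K] [IsAlgClosed K] {m : ℕ}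
    (v : Fin n → K) {u : Fin n → K} (hu : esymm m u ≠ 0) :
    ∃ z : Fin m → K, ∀ ζ, esymm m (v + ζ • u) = esymm m u * ∏ i, (ζ - z i) := by
  set P := linePoly m v u with hP
  have hroots : Multiset.card P.roots = P.natDegree := IsAlgClosed.card_roots_eq_natDegree
  obtain ⟨z, hz⟩ := P.roots.exists_fin_map_eq (hroots.trans (natDegree_linePoly v hu))
  refine ⟨z, fun ζ => ?_⟩
  rw [← eval_linePoly, ← hP, ← C_leadingCoeff_mul_prod_multiset_X_sub_C hroots,
    leadingCoeff_linePoly v hu, ← hz, eval_mul, eval_C, eval_multiset_prod, Multiset.map_map,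
    Multiset.map_map, prod_eq_multiset_prod]
  simp

section RealRooted

lemma card_roots_derivative_eq {p : ℝ[X]} (hp : Multiset.card p.roots = p.natDegree) :
    Multiset.card (derivative p).roots = (derivative p).natDegree := by
  refine (card_roots' _).antisymm ?_
  have := card_roots_le_derivative p
  rw [natDegree_derivative]
  omega

lemma card_roots_linePoly_one {k : ℕ} (hk : k ≤ n) (y : Fin n → ℝ) :
    Multiset.card (linePoly k y 1).roots = k := by
  induction hk using Nat.decreasingInduction with
  | self =>
    have hprod : linePoly n y 1 = ((univ.val.map fun i => -y i).map fun a => X - C a).prod := by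
      have huniv : univ.powersetCard n = {(univ : Finset (Fin n))} := by
        simpa using powersetCard_self (univ : Finset (Fin n))
      rw [linePoly, huniv, sum_singleton, Multiset.map_map, ← prod_eq_multiset_prod]
      refine prod_congr rfl fun i _ => ?_
      simp [sub_eq_add_neg]
    rw [hprod, roots_multiset_prod_X_sub_C, Multiset.card_map, card_val, card_fin]
  | of_succ k hkn ih =>
    have hne : ((n - k : ℕ) : ℝ) ≠ 0 := by exact_mod_cast (Nat.sub_pos_of_lt hkn).ne'
    have hderiv := card_roots_derivative_eq (ih.trans (natDegree_linePoly y
      (by simpa [esymm_one] using (Nat.choose_pos hkn).ne')).symm)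
    rw [derivative_linePoly_one, ← Nat.cast_smul_eq_nsmul ℝ, roots_smul_nonzero _ hne,
      natDegree_smul _ hne, natDegree_linePoly y (by simpa [esymm_one] using
        (Nat.choose_pos hkn.le).ne')] at hderiv
    exact hderiv

lemma im_eq_zero_of_esymm_add_smul_one_eq_zero {m : ℕ} (hm : m ≤ n) (y : Fin n → ℝ) {z : ℂ}
    (hz : esymm m (ofReal ∘ y + z • 1) = 0) : z.im = 0 := by
  have hone : esymm m (1 : Fin n → ℝ) ≠ 0 := by
    simpa [esymm_one] using (Nat.choose_pos hm).ne'
  have hroots := (card_roots_linePoly_one hm y).trans (natDegree_linePoly y hone).symm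
  have hmap : (linePoly m y 1).map ofRealHom = linePoly m (ofReal ∘ y) 1 := by
    rw [map_linePoly]
    congr 1
  have hroot : z ∈ ((linePoly m y 1).map ofRealHom).roots := by
    rw [mem_roots (Polynomial.map_ne_zero (leadingCoeff_ne_zero.mp
      ((leadingCoeff_linePoly y hone).trans_ne hone))), hmap, IsRoot.def, eval_linePoly]
    exact hz
  rw [← roots_map_of_injective_of_card_eq_natDegree ofReal_injective hroots] at hroot
  obtain ⟨r, -, rfl⟩ := Multiset.mem_map.mp hroot
  exact ofReal_im r

end RealRooted

section ContinuityOfRoots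

variable {m : ℕ} {ι : Type*} {l : Filter ι} {v u : ι → Fin n → ℂ} {v' u' : Fin n → ℂ}

lemma esymm_add_smul_eq_pow_mul {ζ : ℂ} (hζ : ζ ≠ 0) (v u : Fin n → ℂ) :
    esymm m (v + ζ • u) = ζ ^ m * esymm m (ζ⁻¹ • v + u) := by
  rw [← esymm_smul, smul_add, smul_inv_smul₀ hζ]

/-- Roots cannot escape to infinity while the leading coefficient stays away from zero: their
inverses would be roots of the reversed polynomial `ξ ↦ esymm m (ξ • v + u)`, which does not
vanish near `ξ = 0`. -/
lemma exists_eventually_norm_le_of_root (hv : Tendsto v l (𝓝 v')) (hu : Tendsto u l (𝓝 u'))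
    (hu' : esymm m u' ≠ 0) :
    ∃ B : ℝ, ∀ᶠ k in l, ∀ ζ : ℂ, esymm m (v k + ζ • u k) = 0 → ‖ζ‖ ≤ B := by
  have hrev : ∀ᶠ p in 𝓝 ((0 : ℂ), (v', u')), esymm m (p.1 • p.2.1 + p.2.2) ≠ 0 := by
    refine ContinuousAt.eventually_ne ?_ (by simpa using hu')
    exact ((continuous_esymm m).comp (by fun_prop)).continuousAt
  rw [nhds_prod_eq, eventually_prod_iff] at hrev
  obtain ⟨pa, hpa, pb, hpb, hne⟩ := hrev
  obtain ⟨δ, hδ, hδpa⟩ := Metric.eventually_nhds_iff.mp hpa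
  refine ⟨δ⁻¹, ((hv.prodMk_nhds hu).eventually hpb).mono fun k hk ζ hζ => ?_⟩
  by_contra! hlt
  have hζ0 : ζ ≠ 0 := norm_pos_iff.mp ((inv_pos.mpr hδ).trans hlt)
  have hrev0 : esymm m (ζ⁻¹ • v k + u k) = 0 := by
    rw [esymm_add_smul_eq_pow_mul hζ0] at hζ
    exact (mul_eq_zero.mp hζ).resolve_left (pow_ne_zero _ hζ0)
  refine hne (hδpa ?_) hk hrev0
  rw [dist_zero_right, norm_inv]
  exact inv_lt_of_inv_lt₀ hδ hlt

lemma exists_root_mem_of_tendsto {S : Set ℂ} (hS : IsClosed S) {v u : ℕ → Fin n → ℂ}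
    (hv : Tendsto v atTop (𝓝 v')) (hu : Tendsto u atTop (𝓝 u')) (hu' : esymm m u' ≠ 0)
    (h : ∀ k, ∃ ζ ∈ S, esymm m (v k + ζ • u k) = 0) :
    ∃ ζ ∈ S, esymm m (v' + ζ • u') = 0 := by
  choose ζ hζS hζ using h
  obtain ⟨B, hB⟩ := exists_eventually_norm_le_of_root hv hu hu'
  obtain ⟨ζ', -, φ, hφ, hlim⟩ := tendsto_subseq_of_frequently_bounded
    (Metric.isBounded_closedBall (x := 0) (r := B))
    (hB.mono fun k hk => mem_closedBall_zero_iff.mpr (hk _ (hζ k))).frequently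
  refine ⟨ζ', hS.mem_of_tendsto hlim (Eventually.of_forall fun k => hζS _), ?_⟩
  have hroot : Tendsto (fun k => esymm m (v (φ k) + ζ (φ k) • u (φ k))) atTop
      (𝓝 (esymm m (v' + ζ' • u'))) :=
    ((continuous_esymm m).tendsto _).comp
      (((hv.comp hφ.tendsto_atTop)).add (hlim.smul (hu.comp hφ.tendsto_atTop)))
  exact tendsto_nhds_unique hroot (by simp only [hζ]; exact tendsto_const_nhds)

/-- Hurwitz-type stability of roots: if `ζ` is a root of the limit but lies at distance `δ` from
the closed set `S` containing all nearby roots, then `|∏ (ζ - zᵢ)| ≥ δ ^ m` along the filter,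
whereas this product tends to `0`. -/
lemma root_mem_of_tendsto [l.NeBot] {S : Set ℂ} (hS : IsClosed S)
    (hv : Tendsto v l (𝓝 v')) (hu : Tendsto u l (𝓝 u')) (hu' : esymm m u' ≠ 0)
    (h : ∀ᶠ k in l, ∀ ζ : ℂ, esymm m (v k + ζ • u k) = 0 → ζ ∈ S)
    {ζ : ℂ} (hζ : esymm m (v' + ζ • u') = 0) : ζ ∈ S := by
  by_contra hζS
  obtain ⟨δ, hδ, hball⟩ := Metric.isOpen_iff.mp hS.isOpen_compl ζ hζS
  have hcu : Tendsto (fun k => esymm m (u k)) l (𝓝 (esymm m u')) :=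
    ((continuous_esymm m).tendsto _).comp hu
  have hquot : Tendsto (fun k => esymm m (v k + ζ • u k) / esymm m (u k)) l (𝓝 0) := by
    have := (((continuous_esymm m).tendsto _).comp (hv.add (hu.const_smul ζ))).div hcu hu'
    rwa [hζ, zero_div] at this
  obtain ⟨k, hk, hku, hsmall⟩ := (h.and ((hcu.eventually_ne hu').and
    (hquot.norm.eventually (gt_mem_nhds (by simpa using pow_pos hδ m))))).exists
  obtain ⟨z, hz⟩ := exists_esymm_add_smul_eq_prod (v k) hku
  have hfar : ∀ i, δ ≤ ‖ζ - z i‖ := fun i => by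
    have hzS : z i ∈ S := hk _ (by rw [hz, prod_eq_zero (mem_univ i) (sub_self _), mul_zero])
    by_contra! hlt
    exact hball (by rwa [Metric.mem_ball, dist_comm, dist_eq_norm]) hzS
  rw [hz, mul_div_cancel_left₀ _ hku, norm_prod] at hsmall
  have hbig : ∏ _i : Fin m, δ ≤ ∏ i, ‖ζ - z i‖ :=
    prod_le_prod (fun _ _ => hδ.le) fun i _ => hfar i
  rw [prod_const, card_univ, Fintype.card_fin] at hbig
  exact hsmall.not_ge hbig

/-- The parameters at which some root has `f ≥ 0`, resp. all roots have `f ≤ 0`, form two closed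
subsets of `[0, 1]` (by the two lemmas above) which cover it and, as no root lies on `f = 0`, are
disjoint. -/
lemma forall_root_lt_of_path {v : Fin n → ℂ} {u : ℝ → Fin n → ℂ} (hu : Continuous u)
    (hu0 : ∀ T ∈ Set.Icc (0 : ℝ) 1, esymm m (u T) ≠ 0) {f : ℂ → ℝ} (hf : Continuous f)
    (hbdry : ∀ T ∈ Set.Icc (0 : ℝ) 1, ∀ ζ : ℂ, esymm m (v + ζ • u T) = 0 → f ζ ≠ 0)
    (h1 : ∀ ζ : ℂ, esymm m (v + ζ • u 1) = 0 → f ζ < 0) :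
    ∀ ζ : ℂ, esymm m (v + ζ • u 0) = 0 → f ζ < 0 := by
  set A := {T | T ∈ Set.Icc (0 : ℝ) 1 ∧ ∃ ζ : ℂ, 0 ≤ f ζ ∧ esymm m (v + ζ • u T) = 0}
  set B := {T | T ∈ Set.Icc (0 : ℝ) 1 ∧ ∀ ζ : ℂ, esymm m (v + ζ • u T) = 0 → f ζ ≤ 0}
  have hA : IsClosed A := IsSeqClosed.isClosed fun T T' hT hlim => by
    have hT' := isClosed_Icc.mem_of_tendsto hlim (Eventually.of_forall fun k => (hT k).1)
    exact ⟨hT', exists_root_mem_of_tendsto (isClosed_le continuous_const hf) tendsto_const_nhds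
      ((hu.tendsto _).comp hlim) (hu0 _ hT') fun k => (hT k).2⟩
  have hB : IsClosed B := IsSeqClosed.isClosed fun T T' hT hlim => by
    have hT' := isClosed_Icc.mem_of_tendsto hlim (Eventually.of_forall fun k => (hT k).1)
    exact ⟨hT', fun ζ hζ => root_mem_of_tendsto (isClosed_le hf continuous_const)
      tendsto_const_nhds ((hu.tendsto _).comp hlim) (hu0 _ hT')
      (Eventually.of_forall fun k => (hT k).2) hζ⟩
  have hcover : Set.Icc (0 : ℝ) 1 ⊆ A ∪ B := fun T hT =>
    (em (∃ ζ : ℂ, 0 ≤ f ζ ∧ esymm m (v + ζ • u T) = 0)).imp (⟨hT, ·⟩) fun h =>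
      ⟨hT, fun ζ hζ => not_lt.mp fun hpos => h ⟨ζ, hpos.le, hζ⟩⟩
  have hdisj : Set.Icc (0 : ℝ) 1 ∩ (A ∩ B) = ∅ := by
    refine Set.eq_empty_of_forall_notMem ?_
    rintro T ⟨hT, ⟨-, ζ, hζf, hζ⟩, -, hle⟩
    exact hbdry T hT ζ hζ (le_antisymm (hle ζ hζ) hζf)
  rcases isPreconnected_iff_subset_of_disjoint_closed.mp isPreconnected_Icc A B hA hB hcover
    hdisj with hsub | hsub
  · obtain ⟨-, ζ, hζf, hζ⟩ := hsub (Set.right_mem_Icc.mpr zero_le_one)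
    exact absurd (h1 ζ hζ) (not_lt.mpr hζf)
  · have h0 := Set.left_mem_Icc.mpr (zero_le_one' ℝ)
    exact fun ζ hζ => lt_of_le_of_ne ((hsub h0).2 ζ hζ) (hbdry 0 h0 ζ hζ)

end ContinuityOfRoots

section GammaCone

variable {m : ℕ} {lam mu : Fin n → ℝ}

lemma esymmS_add_smul_one_pos (hlam : GammaCone n m lam) {j : ℕ} (hj : j ≤ m) {T : ℝ}
    (hT : 0 ≤ T) : 0 < esymmS n j (lam + T • 1) := by
  induction j generalizing T with
  | zero => simp [esymmS]
  | succ j ih =>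
    have hderiv : ∀ t, HasDerivAt (fun t => (linePoly (j + 1) lam 1).eval t)
        ((n - j : ℕ) * esymm j (lam + t • 1)) t := fun t => by
      simpa [derivative_linePoly_one, eval_linePoly] using (linePoly (j + 1) lam 1).hasDerivAt t
    have hmono : MonotoneOn (fun t => (linePoly (j + 1) lam 1).eval t) (Set.Ici 0) :=
      monotoneOn_of_deriv_nonneg (convex_Ici 0) (Polynomial.continuousOn _)
        (Polynomial.differentiableOn _) fun t ht => by
          rw [interior_Ici] at ht
          rw [(hderiv t).deriv]
          exact mul_nonneg (Nat.cast_nonneg _) (ih (by omega) (le_of_lt ht)).le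
    have h0 := hmono (Set.mem_Ici.mpr le_rfl) hT hT
    simp only [eval_linePoly, zero_smul, add_zero] at h0
    exact (hlam (j + 1) (by omega) hj).trans_le h0

lemma _root_.GammaCone.add_smul_one (hlam : GammaCone n m lam) {T : ℝ} (hT : 0 ≤ T) :
    GammaCone n m (lam + T • 1) :=
  fun _ _ hj => esymmS_add_smul_one_pos hlam hj hT

lemma _root_.GammaCone.smul (hlam : GammaCone n m lam) {c : ℝ} (hc : 0 < c) :
    GammaCone n m (c • lam) := fun j h1 h2 => by
  rw [esymmS_eq_esymm, esymm_smul]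
  exact mul_pos (pow_pos hc j) (hlam j h1 h2)

lemma gammaCone_one (hmn : m ≤ n) : GammaCone n m 1 := fun j _ hj => by
  rw [esymmS_eq_esymm, esymm_one]
  exact_mod_cast Nat.choose_pos (hj.trans hmn)

lemma _root_.GammaCone.lineMap_one (hmn : m ≤ n) (hlam : GammaCone n m lam) {T : ℝ}
    (hT : T ∈ Set.Icc (0 : ℝ) 1) : GammaCone n m (AffineMap.lineMap lam 1 T) := by
  rw [AffineMap.lineMap_apply_module]
  rcases hT.2.lt_or_eq with hT1 | rfl
  · have hpos : 0 < 1 - T := sub_pos.mpr hT1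
    have : (1 - T) • lam + T • (1 : Fin n → ℝ) = (1 - T) • (lam + (T / (1 - T)) • 1) := by
      rw [smul_add, smul_smul, mul_div_cancel₀ _ hpos.ne']
    rw [this]
    exact (hlam.add_smul_one (div_nonneg hT.1 hpos.le)).smul hpos
  · simpa using gammaCone_one hmn

lemma esymm_ofReal (x : Fin n → ℝ) : esymm m (ofReal ∘ x) = esymmS n m x :=
  (map_esymm ofRealHom m x).symm

lemma _root_.GammaCone.esymmS_pos_s3 (hlam : GammaCone n m lam) : 0 < esymmS n m lam := by
  rcases m.eq_zero_or_pos with rfl | hm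
  · simp [esymmS]
  · exact hlam m hm le_rfl

lemma forall_root_lt_of_gammaCone (hmn : m ≤ n) (hlam : GammaCone n m lam) (v : Fin n → ℂ)
    {f : ℂ → ℝ} (hf : Continuous f)
    (hbdry : ∀ p, GammaCone n m p → ∀ ζ : ℂ, esymm m (v + ζ • (ofReal ∘ p)) = 0 → f ζ ≠ 0)
    (h1 : ∀ ζ : ℂ, esymm m (v + ζ • 1) = 0 → f ζ < 0) {ζ : ℂ}
    (hζ : esymm m (v + ζ • (ofReal ∘ lam)) = 0) : f ζ < 0 := by
  have hpath : ∀ T ∈ Set.Icc (0 : ℝ) 1, GammaCone n m (AffineMap.lineMap lam 1 T) :=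
    fun T hT => hlam.lineMap_one hmn hT
  refine forall_root_lt_of_path (u := fun T => ofReal ∘ AffineMap.lineMap lam 1 T) ?_
    (fun T hT => ?_) hf (fun T hT => hbdry _ (hpath T hT)) (by simpa [ofReal_comp_one] using h1) ζ
    (by simpa using hζ)
  · exact continuous_pi fun i => continuous_ofReal.comp
      ((continuous_apply i).comp AffineMap.lineMap_continuous)
  · rw [esymm_ofReal]
    exact_mod_cast (hpath T hT).esymmS_pos_s3.ne'

lemma im_neg_of_root (hmn : m ≤ n) (hlam : GammaCone n m lam) (x : Fin n → ℝ) {ε : ℝ}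
    (hε : 0 < ε) {ζ : ℂ} (hζ : esymm m (ofReal ∘ x + (ε * I) • 1 + ζ • (ofReal ∘ lam)) = 0) :
    ζ.im < 0 := by
  refine forall_root_lt_of_gammaCone hmn hlam _ continuous_im (fun p _ ζ hζ him => ?_)
    (fun ζ hζ => ?_) hζ
  · have hreal : ofReal ∘ x + (ε * I) • 1 + ζ • (ofReal ∘ p)
        = ofReal ∘ (x + ζ.re • p) + (ε * I) • 1 := by
      ext i
      apply Complex.ext <;> simp [him]
    rw [hreal] at hζ
    simpa [hε.ne'] using im_eq_zero_of_esymm_add_smul_one_eq_zero hmn _ hζ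
  · rw [add_assoc, ← add_smul] at hζ
    have := im_eq_zero_of_esymm_add_smul_one_eq_zero hmn x hζ
    simp only [add_im, mul_im, ofReal_re, I_im, ofReal_im, I_re, mul_zero, mul_one, add_zero]
      at this
    linarith

lemma im_eq_zero_of_root (hmn : m ≤ n) (hlam : GammaCone n m lam) (x : Fin n → ℝ) {ζ : ℂ}
    (hζ : esymm m (ofReal ∘ x + ζ • (ofReal ∘ lam)) = 0) : ζ.im = 0 := by
  have hlim : Tendsto (fun ε : ℝ => ofReal ∘ x + ((ε : ℂ) * I) • (1 : Fin n → ℂ)) (𝓝[>] 0)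
      (𝓝 (ofReal ∘ x)) :=
    ((by fun_prop : Continuous fun ε : ℝ => ofReal ∘ x + ((ε : ℂ) * I) • (1 : Fin n → ℂ)).tendsto'
      0 _ (by simp)).mono_left nhdsWithin_le_nhds
  have him_le : ∀ {ζ : ℂ}, esymm m (ofReal ∘ x + ζ • (ofReal ∘ lam)) = 0 → ζ.im ≤ 0 :=
    fun hζ => root_mem_of_tendsto (isClosed_le continuous_im continuous_const) hlim
      tendsto_const_nhds (by rw [esymm_ofReal]; exact_mod_cast hlam.esymmS_pos_s3.ne')
      (eventually_nhdsWithin_of_forall fun _ hε _ hζ => (im_neg_of_root hmn hlam x hε hζ).le) hζ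
  have hconj : esymm m (ofReal ∘ x + conj ζ • (ofReal ∘ lam)) = 0 := by
    have := congrArg conj hζ
    rw [map_esymm, map_zero] at this
    convert this using 2
    ext i
    simp
  exact le_antisymm (him_le hζ) (by simpa using him_le hconj)

lemma re_neg_of_root (hmn : m ≤ n) (hlam : GammaCone n m lam)
    (hmu : GammaCone n m mu) {ζ : ℂ} (hζ : esymm m (ofReal ∘ mu + ζ • (ofReal ∘ lam)) = 0) :
    ζ.re < 0 := by
  refine forall_root_lt_of_gammaCone hmn hlam _ continuous_re (fun p hp ζ hζ hre => ?_)
    (fun ζ hζ => ?_) hζ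
  · have hζ0 : ζ = 0 := Complex.ext hre (im_eq_zero_of_root hmn hp mu hζ)
    rw [hζ0, zero_smul, add_zero, esymm_ofReal] at hζ
    exact hmu.esymmS_pos_s3.ne' (by exact_mod_cast hζ)
  · have hζr : ζ = (ζ.re : ℂ) :=
      Complex.ext rfl (by simp [im_eq_zero_of_esymm_add_smul_one_eq_zero hmn mu hζ])
    rw [hζr, ← ofReal_comp_one, ← ofReal_comp_smul, ← ofReal_comp_add, esymm_ofReal] at hζ
    by_contra! hre
    exact (esymmS_add_smul_one_pos hmu le_rfl hre).ne' (by exact_mod_cast hζ)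

lemma exists_esymmS_add_smul_eq_prod (hmn : m ≤ n) (hlam : GammaCone n m lam)
    (hmu : GammaCone n m mu) :
    ∃ t : Fin m → ℝ, (∀ i, 0 < t i) ∧
      ∀ s : ℝ, esymmS n m (mu + s • lam) = esymmS n m lam * ∏ i, (s + t i) := by
  obtain ⟨z, hz⟩ := exists_esymm_add_smul_eq_prod (ofReal ∘ mu) (u := ofReal ∘ lam)
    (by rw [esymm_ofReal]; exact_mod_cast hlam.esymmS_pos_s3.ne')
  have hroot : ∀ i, esymm m (ofReal ∘ mu + z i • (ofReal ∘ lam)) = 0 := fun i => by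
    rw [hz, prod_eq_zero (mem_univ i) (sub_self _), mul_zero]
  refine ⟨fun i => -(z i).re, fun i => neg_pos.mpr (re_neg_of_root hmn hlam hmu (hroot i)),
    fun s => ofReal_injective ?_⟩
  rw [← esymm_ofReal, ofReal_comp_add, ofReal_comp_smul, hz, esymm_ofReal]
  push_cast
  congr 1
  refine prod_congr rfl fun i _ => ?_
  conv_lhs => rw [← Complex.re_add_im (z i), im_eq_zero_of_root hmn hlam mu (hroot i)]
  simp [sub_eq_add_neg]

lemma esymmS_rpow_add_le (hm : 1 ≤ m) (hmn : m ≤ n) (hlam : GammaCone n m lam)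
    (hmu : GammaCone n m mu) :
    esymmS n m lam ^ ((1 : ℝ) / m) + esymmS n m mu ^ ((1 : ℝ) / m)
      ≤ esymmS n m (lam + mu) ^ ((1 : ℝ) / m) := by
  obtain ⟨t, ht, hfac⟩ := exists_esymmS_add_smul_eq_prod hmn hlam hmu
  have hamgm := Real.geom_mean_add_geom_mean_le_geom_mean_add univ
    (w := fun _ => (1 : ℝ) / m) (a := fun _ => 1) (b := t) (fun _ _ => by positivity)
    (by simp [(by positivity : (m : ℝ) ≠ 0)]) (fun _ _ => one_pos) (fun i _ => ht i)
  rw [Real.finsetProd_rpow _ _ (fun i _ => (ht i).le),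
    Real.finsetProd_rpow _ _ (fun i _ => (add_pos one_pos (ht i)).le)] at hamgm
  have h0 := hfac 0
  have h1 := hfac 1
  simp only [zero_smul, add_zero, zero_add] at h0
  rw [one_smul, add_comm] at h1
  have hS := hlam.esymmS_pos_s3
  rw [h0, h1, Real.mul_rpow hS.le (prod_pos fun i _ => ht i).le,
    Real.mul_rpow hS.le (prod_pos fun i _ => add_pos one_pos (ht i)).le]
  simp only [Real.one_rpow, prod_const_one] at hamgm
  nlinarith [Real.rpow_pos_of_pos hS ((1 : ℝ) / m)]

lemma esymmS_smul_rpow (hm : m ≠ 0) {c : ℝ} (hc : 0 ≤ c) {x : Fin n → ℝ}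
    (hx : 0 ≤ esymmS n m x) :
    esymmS n m (c • x) ^ ((1 : ℝ) / m) = c * esymmS n m x ^ ((1 : ℝ) / m) := by
  rw [esymmS_eq_esymm, esymm_smul, ← esymmS_eq_esymm, Real.mul_rpow (pow_nonneg hc m) hx,
    ← Real.rpow_natCast, ← Real.rpow_mul hc, mul_one_div_cancel (Nat.cast_ne_zero.mpr hm),
    Real.rpow_one]

end GammaCone

end Garding

/-- Concavity of S_m^{1/m} on the Gårding cone. -/
theorem esymm_rpow_concave (n m : ℕ) (hm : 1 ≤ m) (hmn : m ≤ n)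
    (lam mu : Fin n → ℝ) (hlam : GammaCone n m lam) (hmu : GammaCone n m mu)
    (t : ℝ) (ht0 : 0 ≤ t) (ht1 : t ≤ 1) :
    t * esymmS n m lam ^ ((1 : ℝ) / (m : ℝ)) + (1 - t) * esymmS n m mu ^ ((1 : ℝ) / (m : ℝ)) ≤
      esymmS n m (fun i => t * lam i + (1 - t) * mu i) ^ ((1 : ℝ) / (m : ℝ)) := by
  rcases ht0.eq_or_lt with rfl | ht0
  · simp
  rcases ht1.eq_or_lt with rfl | ht1
  · simp
  have hs : 0 < 1 - t := sub_pos.mpr ht1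
  have key := Garding.esymmS_rpow_add_le hm hmn (hlam.smul ht0) (hmu.smul hs)
  rwa [Garding.esymmS_smul_rpow (by omega) ht0.le hlam.esymmS_pos_s3.le,
    Garding.esymmS_smul_rpow (by omega) hs.le hmu.esymmS_pos_s3.le] at key
end

section
/- For every 1 ≤ m ≤ n, the function λ ↦ log S_m(λ) is concave on Γ_m: for all λ, μ ∈ Γ_m and t ∈ [0,1], log S_m(tλ + (1−t)μ) ≥ t·log S_m(λ) + (1−t)·log S_m(μ). -/
/-!
Write `S_m = ∏_{k=1}^m S_k / S_{k-1}`. It suffices that each quotient `q_k = S_k / S_{k-1}` is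
concave and positive on `Γ_k`, and this is proved by induction on `k` from the identity
`k q_k(λ) = S_1(λ) - ∑ᵢ λᵢ² / (λᵢ + q_{k-1}(λ|i))`, where `λ|i` is `λ` with the `i`-th entry
deleted: the right-hand side is concave because `(a, b) ↦ a² / b` is jointly convex and
decreasing in `b`. The induction needs `λ|i ∈ Γ_{k-1}` for `λ ∈ Γ_k`, which follows from Newton's
inequality `S_{k-1} S_{k+1} ≤ S_k²`. Newton's inequality is reduced, by differentiating
`∏ (X + λᵢ)` (Rolle keeps it real-rooted), to the case `k = n - 1`, which is Cauchy–Schwarz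
for the variables `1 / λᵢ`.
-/

open Finset

open Polynomial

theorem ConcaveOn.log {E : Type*} [AddCommMonoid E] [SMul ℝ E] {s : Set E} {f : E → ℝ}
    (hf : ConcaveOn ℝ s f) (hpos : ∀ x ∈ s, 0 < f x) : ConcaveOn ℝ s fun x => Real.log (f x) :=
  ⟨hf.1, fun x hx y hy _ _ ha hb hab =>
    (strictConcaveOn_log_Ioi.concaveOn.2 (hpos x hx) (hpos y hy) ha hb hab).trans
      (Real.log_le_log (convex_Ioi (0 : ℝ) (hpos x hx) (hpos y hy) ha hb hab)
        (hf.2 hx hy ha hb hab))⟩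

theorem mul_add_mul_sq_div_le {a b u v p q w : ℝ} (ha : 0 ≤ a) (hb : 0 ≤ b) (hab : a + b = 1)
    (hp : 0 < p) (hq : 0 < q) (hw : a * p + b * q ≤ w) :
    (a * u + b * v) ^ 2 / w ≤ a * (u ^ 2 / p) + b * (v ^ 2 / q) := by
  have hpq : 0 < a * p + b * q := convex_Ioi (0 : ℝ) hp hq ha hb hab
  have hgap : (a * (u ^ 2 / p) + b * (v ^ 2 / q)) * (a * p + b * q) - (a * u + b * v) ^ 2 =
      a * b * (u * q - v * p) ^ 2 / (p * q) := by
    field_simp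
    ring
  calc (a * u + b * v) ^ 2 / w ≤ (a * u + b * v) ^ 2 / (a * p + b * q) :=
        div_le_div_of_nonneg_left (sq_nonneg _) hpq hw
    _ ≤ a * (u ^ 2 / p) + b * (v ^ 2 / q) := by
      rw [div_le_iff₀ hpq]
      linarith [show 0 ≤ a * b * (u * q - v * p) ^ 2 / (p * q) by positivity]

theorem Nat.choose_mul_choose_add_two_le_sq (n k : ℕ) :
    n.choose k * n.choose (k + 2) ≤ n.choose (k + 1) ^ 2 := by
  rcases lt_or_ge n (k + 2) with h | h
  · rw [Nat.choose_eq_zero_of_lt h, mul_zero]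
    exact Nat.zero_le _
  have hfactor : (k + 1) * (n - (k + 1)) ≤ (n - k) * (k + 2) := by
    rw [mul_comm]; exact Nat.mul_le_mul (by omega) (by omega)
  refine Nat.le_of_mul_le_mul_right ?_ (Nat.mul_pos (by omega : 0 < n - k) (by omega : 0 < k + 2))
  calc n.choose k * n.choose (k + 2) * ((n - k) * (k + 2))
      = n.choose k * (n - k) * (n.choose (k + 2) * (k + 2)) := by ring
    _ = n.choose (k + 1) * (k + 1) * (n.choose (k + 1) * (n - (k + 1))) := by
      rw [Nat.choose_succ_right_eq, Nat.choose_succ_right_eq]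
    _ = n.choose (k + 1) ^ 2 * ((k + 1) * (n - (k + 1))) := by ring
    _ ≤ n.choose (k + 1) ^ 2 * ((n - k) * (k + 2)) := Nat.mul_le_mul_left _ hfactor

section Esymm

variable {ι R : Type*} [CommRing R]

noncomputable def esymmOn (A : Finset ι) (x : ι → R) (k : ℕ) : R :=
  ∑ s ∈ A.powersetCard k, ∏ i ∈ s, x i

theorem esymmOn_eq_esymm (A : Finset ι) (x : ι → R) (k : ℕ) :
    esymmOn A x k = (A.val.map x).esymm k :=
  (Finset.esymm_map_val x A k).symm

@[simp]
theorem esymmOn_zero (A : Finset ι) (x : ι → R) : esymmOn A x 0 = 1 := by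
  simp [esymmOn]

theorem esymmOn_one (A : Finset ι) (x : ι → R) : esymmOn A x 1 = ∑ i ∈ A, x i := by
  simp [esymmOn, powersetCard_one]

theorem esymmOn_card (A : Finset ι) (x : ι → R) : esymmOn A x #A = ∏ i ∈ A, x i := by
  simp [esymmOn]

theorem esymmOn_eq_zero_of_card_lt {A : Finset ι} {k : ℕ} (h : #A < k) (x : ι → R) :
    esymmOn A x k = 0 := by
  simp [esymmOn, powersetCard_eq_empty.2 h]

variable [DecidableEq ι]

theorem esymmOn_succ_of_mem {A : Finset ι} {i : ι} (hi : i ∈ A) (x : ι → R) (k : ℕ) :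
    esymmOn A x (k + 1) = esymmOn (A.erase i) x (k + 1) + x i * esymmOn (A.erase i) x k := by
  have hiA : i ∉ A.erase i := notMem_erase i A
  have hi_notin : ∀ s ∈ (A.erase i).powersetCard k, i ∉ s := fun s hs h =>
    hiA ((mem_powersetCard.1 hs).1 h)
  conv_lhs => rw [esymmOn, ← insert_erase hi, powersetCard_succ_insert hiA]
  rw [sum_union, sum_image, esymmOn, esymmOn, mul_sum]
  · exact congrArg _ (sum_congr rfl fun s hs => prod_insert (hi_notin s hs))
  · exact fun s hs t ht hst => by
      rw [← erase_insert (hi_notin s hs), hst, erase_insert (hi_notin t ht)]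
  · refine disjoint_left.2 fun s hs hs' => ?_
    obtain ⟨t, -, rfl⟩ := mem_image.1 hs'
    exact hiA ((mem_powersetCard.1 hs).1 (mem_insert_self i t))

theorem sum_esymmOn_erase (A : Finset ι) (x : ι → R) (k : ℕ) :
    ∑ i ∈ A, esymmOn (A.erase i) x k = ((#A : R) - k) * esymmOn A x k := by
  have hswap : ∑ i ∈ A, esymmOn (A.erase i) x k =
      ∑ s ∈ A.powersetCard k, ∑ _i ∈ A \ s, ∏ j ∈ s, x j := by
    refine sum_comm' fun i s => ?_
    simp only [mem_powersetCard, subset_erase, mem_sdiff]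
    tauto
  rw [hswap, esymmOn, mul_sum]
  refine sum_congr rfl fun s hs => ?_
  obtain ⟨hsA, rfl⟩ := mem_powersetCard.1 hs
  rw [sum_const, card_sdiff_of_subset hsA, nsmul_eq_mul, Nat.cast_sub (card_le_card hsA)]

theorem sum_mul_esymmOn_erase (A : Finset ι) (x : ι → R) (k : ℕ) :
    ∑ i ∈ A, x i * esymmOn (A.erase i) x k = (k + 1) * esymmOn A x (k + 1) := by
  have h : ∑ _i ∈ A, esymmOn A x (k + 1) =
      ∑ i ∈ A, esymmOn (A.erase i) x (k + 1) + ∑ i ∈ A, x i * esymmOn (A.erase i) x k := by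
    rw [← sum_add_distrib]
    exact sum_congr rfl fun i hi => esymmOn_succ_of_mem hi x k
  rw [sum_const, nsmul_eq_mul, sum_esymmOn_erase] at h
  push_cast at h
  linear_combination -h

theorem add_two_mul_esymmOn (A : Finset ι) (x : ι → R) (k : ℕ) :
    (k + 2) * esymmOn A x (k + 2) =
      esymmOn A x 1 * esymmOn A x (k + 1) - ∑ i ∈ A, x i ^ 2 * esymmOn (A.erase i) x k := by
  have h := sum_mul_esymmOn_erase A x (k + 1)
  have hdel : ∀ i ∈ A, x i * esymmOn (A.erase i) x (k + 1) =
      x i * esymmOn A x (k + 1) - x i ^ 2 * esymmOn (A.erase i) x k := fun i hi => by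
    rw [esymmOn_succ_of_mem hi x k]; ring
  rw [sum_congr rfl hdel, sum_sub_distrib, ← sum_mul, ← esymmOn_one] at h
  push_cast at h
  linear_combination -h

theorem esymmOn_card_sub {K : Type*} [Field K] {A : Finset ι} {x : ι → K}
    (hx : ∀ i ∈ A, x i ≠ 0) {k : ℕ} (hk : k ≤ #A) :
    esymmOn A x (#A - k) = (∏ i ∈ A, x i) * esymmOn A (fun i => (x i)⁻¹) k := by
  rw [esymmOn, esymmOn, mul_sum]
  refine sum_nbij' (A \ ·) (A \ ·) ?_ ?_ ?_ ?_ ?_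
  · intro s hs
    obtain ⟨hsA, hcard⟩ := mem_powersetCard.1 hs
    simp [sdiff_subset, card_sdiff_of_subset hsA, hcard]
    omega
  · intro s hs
    obtain ⟨hsA, hcard⟩ := mem_powersetCard.1 hs
    simp [sdiff_subset, card_sdiff_of_subset hsA, hcard]
  · intro s hs; exact Finset.sdiff_sdiff_eq_self (mem_powersetCard.1 hs).1
  · intro s hs; exact Finset.sdiff_sdiff_eq_self (mem_powersetCard.1 hs).1
  · intro s hs
    have hsA := (mem_powersetCard.1 hs).1
    have hne : ∏ i ∈ A \ s, x i ≠ 0 := prod_ne_zero_iff.2 fun i hi => hx i (mem_sdiff.1 hi).1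
    rw [← prod_sdiff hsA, prod_inv_distrib]
    field_simp

theorem esymmOn_succ_div_esymmOn_erase {K : Type*} [Field K] {A : Finset ι} {i : ι} (hi : i ∈ A)
    {x : ι → K} {k : ℕ} (h : esymmOn (A.erase i) x k ≠ 0) :
    esymmOn A x (k + 1) / esymmOn (A.erase i) x k =
      x i + esymmOn (A.erase i) x (k + 1) / esymmOn (A.erase i) x k := by
  rw [esymmOn_succ_of_mem hi]
  field_simp
  ring

theorem add_two_mul_esymmOn_div {K : Type*} [Field K] (A : Finset ι) (x : ι → K) (k : ℕ)
    (h : esymmOn A x (k + 1) ≠ 0) :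
    (k + 2) * (esymmOn A x (k + 2) / esymmOn A x (k + 1)) =
      esymmOn A x 1 - ∑ i ∈ A, x i ^ 2 / (esymmOn A x (k + 1) / esymmOn (A.erase i) x k) := by
  simp_rw [div_div_eq_mul_div, ← sum_div, ← mul_div_assoc, add_two_mul_esymmOn]
  field_simp

end Esymm

section Newton

variable {ι : Type*}

theorem sq_card_mul_esymmOn_two_le [DecidableEq ι] (A : Finset ι) (x : ι → ℝ) :
    (#A : ℝ) ^ 2 * esymmOn A x 2 ≤ ((#A).choose 2 : ℝ) * esymmOn A x 1 ^ 2 := by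
  have h2 := add_two_mul_esymmOn A x 0
  simp only [esymmOn_zero, mul_one, CharP.cast_eq_zero, zero_add] at h2
  have hcs : esymmOn A x 1 ^ 2 ≤ #A * ∑ i ∈ A, x i ^ 2 := by
    rw [esymmOn_one]; exact sq_sum_le_card_mul_sum_sq
  rw [Nat.cast_choose_two]
  nlinarith [mul_le_mul_of_nonneg_left hcs (Nat.cast_nonneg (α := ℝ) #A)]

theorem sq_card_mul_esymmOn_card_mul_le [DecidableEq ι] (A : Finset ι) (x : ι → ℝ)
    (hA : 2 ≤ #A) :
    (#A : ℝ) ^ 2 * (esymmOn A x #A * esymmOn A x (#A - 2)) ≤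
      ((#A).choose 2 : ℝ) * esymmOn A x (#A - 1) ^ 2 := by
  by_cases h0 : ∃ i ∈ A, x i = 0
  · obtain ⟨i, hi, hxi⟩ := h0
    rw [esymmOn_card, prod_eq_zero hi hxi, zero_mul, mul_zero]
    positivity
  · push Not at h0
    have h := sq_card_mul_esymmOn_two_le A fun i => (x i)⁻¹
    rw [esymmOn_card, esymmOn_card_sub h0 hA, esymmOn_card_sub h0 (by omega)]
    linear_combination (∏ i ∈ A, x i) ^ 2 * h

theorem exists_derivative_prod_X_add_C_eq (s : Multiset ℝ) {M : ℕ} (hs : s.card = M + 1) :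
    ∃ t : Multiset ℝ, t.card = M ∧
      derivative (s.map fun r => X + C r).prod =
        C ((M : ℝ) + 1) * (t.map fun r => X + C r).prod := by
  have hneg : ∀ u : Multiset ℝ,
      (u.map fun r => X + C r) = (u.map Neg.neg).map fun r => X - C r := by
    intro u; rw [Multiset.map_map]; simp [sub_eq_add_neg]
  set p := (s.map fun r => X + C r).prod with hp
  have hdeg : p.natDegree = M + 1 := by
    rw [hp, hneg, natDegree_multiset_prod_X_sub_C_eq_card, Multiset.card_map, hs]
  have hroots : p.roots.card = M + 1 := by
    rw [hp, hneg, roots_multiset_prod_X_sub_C, Multiset.card_map, hs]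
  have hmonic : p.Monic := monic_multiset_prod_of_monic _ _ fun r _ => monic_X_add_C r
  have hrolle := card_roots_le_derivative p
  have hle := card_roots' (derivative p)
  have hdeg' := natDegree_derivative_le p
  have hlc : (derivative p).leadingCoeff = M + 1 := by
    rw [leadingCoeff, show (derivative p).natDegree = M by omega, coeff_derivative,
      ← hdeg, ← leadingCoeff, hmonic.leadingCoeff]
    ring
  refine ⟨(derivative p).roots.map Neg.neg, by rw [Multiset.card_map]; omega, ?_⟩
  have hsplit : (derivative p).roots.card = (derivative p).natDegree := by omega
  conv_lhs => rw [← C_leadingCoeff_mul_prod_multiset_X_sub_C hsplit, hlc]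
  rw [hneg, Multiset.map_map, Multiset.map_map]
  simp only [Function.comp_def, neg_neg]

theorem exists_esymm_div_choose_eq_of_card_eq_succ (s : Multiset ℝ) {M : ℕ}
    (hs : s.card = M + 1) :
    ∃ t : Multiset ℝ, t.card = M ∧
      ∀ i ≤ M, t.esymm i / M.choose i = s.esymm i / (M + 1).choose i := by
  obtain ⟨t, ht, hder⟩ := exists_derivative_prod_X_add_C_eq s hs
  refine ⟨t, ht, fun i hi => ?_⟩
  have hcoeff := congrArg (coeff · (M - i)) hder
  simp only [coeff_derivative, coeff_C_mul] at hcoeff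
  rw [Multiset.prod_X_add_C_coeff s (by omega), Multiset.prod_X_add_C_coeff t (by omega), hs, ht,
    show M + 1 - (M - i + 1) = i by omega, show M - (M - i) = i by omega] at hcoeff
  have hchoose : (M.choose i : ℝ) * (M + 1) = (M + 1).choose i * ((M - i : ℕ) + 1) := by
    have h := Nat.choose_mul_succ_eq M i
    rw [show M + 1 - i = M - i + 1 by omega] at h
    exact_mod_cast h
  have h1 : (0 : ℝ) < M.choose i := by exact_mod_cast Nat.choose_pos hi
  have h2 : (0 : ℝ) < (M + 1).choose i := by exact_mod_cast Nat.choose_pos (by omega)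
  have h3 : (0 : ℝ) < (M - i : ℕ) + 1 := by positivity
  rw [div_eq_div_iff h1.ne' h2.ne']
  refine mul_right_cancel₀ h3.ne' ?_
  linear_combination (-t.esymm i) * hchoose - (M.choose i : ℝ) * hcoeff

theorem esymm_div_choose_mul_le_sq_of_card_eq (s : Multiset ℝ) {k : ℕ} (hs : s.card = k + 2) :
    s.esymm k / (k + 2).choose k * (s.esymm (k + 2) / (k + 2).choose (k + 2)) ≤
      (s.esymm (k + 1) / (k + 2).choose (k + 1)) ^ 2 := by
  have h := sq_card_mul_esymmOn_card_mul_le s.toEnumFinset Prod.fst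
    (by rw [Multiset.card_toEnumFinset]; omega)
  simp only [esymmOn_eq_esymm, Multiset.map_toEnumFinset_fst, Multiset.card_toEnumFinset, hs,
    Nat.add_sub_cancel, show k + 2 - 1 = k + 1 by omega] at h
  have hC : (0 : ℝ) < (k + 2).choose 2 := by exact_mod_cast Nat.choose_pos (by omega)
  rw [Nat.choose_self, Nat.choose_succ_self_right, Nat.choose_symm_add (a := k) (b := 2),
    Nat.cast_one, div_one, div_pow, div_mul_eq_mul_div, div_le_div_iff₀ hC (by positivity)]
  push_cast at h ⊢
  linear_combination h

theorem esymm_div_choose_mul_le_sq (s : Multiset ℝ) {k : ℕ} (hk : k + 2 ≤ s.card) :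
    s.esymm k / s.card.choose k * (s.esymm (k + 2) / s.card.choose (k + 2)) ≤
      (s.esymm (k + 1) / s.card.choose (k + 1)) ^ 2 := by
  obtain ⟨N, hN⟩ : ∃ N, s.card = N := ⟨_, rfl⟩
  rw [hN] at hk ⊢
  induction N generalizing s with
  | zero => omega
  | succ M ih =>
    rcases (show k + 2 = M + 1 ∨ k + 2 ≤ M by omega) with htop | hlt
    · rw [← htop]
      exact esymm_div_choose_mul_le_sq_of_card_eq s (hN.trans htop.symm)
    · obtain ⟨t, ht, hts⟩ := exists_esymm_div_choose_eq_of_card_eq_succ s hN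
      rw [← hts k (by omega), ← hts (k + 1) (by omega), ← hts (k + 2) hlt]
      exact ih t hlt ht

theorem esymmOn_mul_esymmOn_add_two_le_sq (A : Finset ι) (x : ι → ℝ) (k : ℕ) :
    esymmOn A x k * esymmOn A x (k + 2) ≤ esymmOn A x (k + 1) ^ 2 := by
  rcases lt_or_ge #A (k + 2) with hA | hA
  · rw [esymmOn_eq_zero_of_card_lt hA, mul_zero]
    positivity
  have hN := esymm_div_choose_mul_le_sq (A.val.map x) (k := k) (by simpa using hA)
  simp only [Multiset.card_map, card_val, ← esymmOn_eq_esymm] at hN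
  have hc : ((#A).choose k : ℝ) * (#A).choose (k + 2) ≤ ((#A).choose (k + 1) : ℝ) ^ 2 := by
    exact_mod_cast Nat.choose_mul_choose_add_two_le_sq _ _
  have ha : (0 : ℝ) < (#A).choose k := by exact_mod_cast Nat.choose_pos (by omega)
  have hb : (0 : ℝ) < (#A).choose (k + 1) := by exact_mod_cast Nat.choose_pos (by omega)
  have hc' : (0 : ℝ) < (#A).choose (k + 2) := by exact_mod_cast Nat.choose_pos hA
  calc esymmOn A x k * esymmOn A x (k + 2)
      = esymmOn A x k / (#A).choose k * (esymmOn A x (k + 2) / (#A).choose (k + 2)) *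
          ((#A).choose k * (#A).choose (k + 2)) := by field_simp
    _ ≤ (esymmOn A x (k + 1) / (#A).choose (k + 1)) ^ 2 * ((#A).choose (k + 1)) ^ 2 := by
      gcongr
    _ = esymmOn A x (k + 1) ^ 2 := by field_simp

end Newton

section GardingCone

variable {ι : Type*}

def gardingCone (A : Finset ι) (m : ℕ) : Set (ι → ℝ) :=
  {x | ∀ k ≤ m, 0 < esymmOn A x k}

theorem gardingCone_zero (A : Finset ι) : gardingCone A 0 = Set.univ := by
  ext x
  simp [gardingCone]

theorem mem_gardingCone_succ {A : Finset ι} {m : ℕ} {x : ι → ℝ} :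
    x ∈ gardingCone A (m + 1) ↔ x ∈ gardingCone A m ∧ 0 < esymmOn A x (m + 1) := by
  simp only [gardingCone, Set.mem_ofPred_eq, Nat.le_succ_iff]
  grind

theorem gardingCone_succ_subset (A : Finset ι) (m : ℕ) :
    gardingCone A (m + 1) ⊆ gardingCone A m :=
  fun _ hx => (mem_gardingCone_succ.1 hx).1

variable [DecidableEq ι]

theorem mem_gardingCone_erase {A : Finset ι} {i : ι} (hi : i ∈ A) {x : ι → ℝ} :
    ∀ {m : ℕ}, x ∈ gardingCone A (m + 1) → x ∈ gardingCone (A.erase i) m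
  | 0, _ => by simp [gardingCone_zero]
  | m + 1, hx => by
    have hB := mem_gardingCone_erase hi (gardingCone_succ_subset A _ hx)
    refine mem_gardingCone_succ.2 ⟨hB, ?_⟩
    by_contra! hle
    have h1 := hx (m + 1) (by omega)
    have h2 := hx (m + 2) le_rfl
    rw [esymmOn_succ_of_mem hi] at h1 h2
    -- with `S = esymmOn (A.erase i) x`, `S m * S (m + 2) - S (m + 1) ^ 2` equals
    -- `S m * (S (m + 2) + x i * S (m + 1)) - S (m + 1) * (S (m + 1) + x i * S m)`,
    -- which is positive when `S (m + 1) ≤ 0`, contradicting Newton's inequality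
    nlinarith [hB m le_rfl, esymmOn_mul_esymmOn_add_two_le_sq (A.erase i) x m,
      mul_pos (hB m le_rfl) h2, mul_nonneg (neg_nonneg.2 hle) h1.le]

theorem esymmOn_div_esymmOn_erase_le {A : Finset ι} {m : ℕ} {i : ι} (hi : i ∈ A)
    (hconc : ConcaveOn ℝ (gardingCone (A.erase i) (m + 1))
      fun x => esymmOn (A.erase i) x (m + 1) / esymmOn (A.erase i) x m)
    {x y : ι → ℝ} (hx : x ∈ gardingCone A (m + 2)) (hy : y ∈ gardingCone A (m + 2))
    {a b : ℝ} (ha : 0 ≤ a) (hb : 0 ≤ b) (hab : a + b = 1) :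
    a * (esymmOn A x (m + 1) / esymmOn (A.erase i) x m) +
        b * (esymmOn A y (m + 1) / esymmOn (A.erase i) y m) ≤
      esymmOn A (a • x + b • y) (m + 1) / esymmOn (A.erase i) (a • x + b • y) m := by
  have hxi := mem_gardingCone_erase hi hx
  have hyi := mem_gardingCone_erase hi hy
  have hzi := hconc.1 hxi hyi ha hb hab
  have hq := hconc.2 hxi hyi ha hb hab
  simp only [smul_eq_mul] at hq
  rw [esymmOn_succ_div_esymmOn_erase hi (hxi m (by omega)).ne',
    esymmOn_succ_div_esymmOn_erase hi (hyi m (by omega)).ne',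
    esymmOn_succ_div_esymmOn_erase hi (hzi m (by omega)).ne']
  simp only [Pi.add_apply, Pi.smul_apply, smul_eq_mul]
  linarith

theorem esymmOn_div_le_of_concaveOn_erase {A : Finset ι} {m : ℕ}
    (ih : ∀ i ∈ A, ConcaveOn ℝ (gardingCone (A.erase i) (m + 1))
      fun x => esymmOn (A.erase i) x (m + 1) / esymmOn (A.erase i) x m)
    {x y : ι → ℝ} (hx : x ∈ gardingCone A (m + 2)) (hy : y ∈ gardingCone A (m + 2))
    {a b : ℝ} (ha : 0 ≤ a) (hb : 0 ≤ b) (hab : a + b = 1)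
    (hz : a • x + b • y ∈ gardingCone A (m + 1)) :
    a * (esymmOn A x (m + 2) / esymmOn A x (m + 1)) +
        b * (esymmOn A y (m + 2) / esymmOn A y (m + 1)) ≤
      esymmOn A (a • x + b • y) (m + 2) / esymmOn A (a • x + b • y) (m + 1) := by
  set z := a • x + b • y with hz_def
  set r : (ι → ℝ) → ι → ℝ := fun w i => esymmOn A w (m + 1) / esymmOn (A.erase i) w m
  have hrpos : ∀ w ∈ gardingCone A (m + 2), ∀ i ∈ A, 0 < r w i := fun w hw i hi =>
    div_pos (hw (m + 1) (by omega)) (mem_gardingCone_erase hi hw m (by omega))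
  have hsum : ∑ i ∈ A, z i ^ 2 / r z i ≤
      a * ∑ i ∈ A, x i ^ 2 / r x i + b * ∑ i ∈ A, y i ^ 2 / r y i := by
    rw [mul_sum, mul_sum, ← sum_add_distrib]
    exact sum_le_sum fun i hi => mul_add_mul_sq_div_le ha hb hab (hrpos x hx i hi)
      (hrpos y hy i hi) (esymmOn_div_esymmOn_erase_le hi (ih i hi) hx hy ha hb hab)
  have hlin : esymmOn A z 1 = a * esymmOn A x 1 + b * esymmOn A y 1 := by
    simp only [esymmOn_one, hz_def, Pi.add_apply, Pi.smul_apply, smul_eq_mul, sum_add_distrib,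
      mul_sum]
  have idx := add_two_mul_esymmOn_div A x m (hx (m + 1) (by omega)).ne'
  have idy := add_two_mul_esymmOn_div A y m (hy (m + 1) (by omega)).ne'
  have idz := add_two_mul_esymmOn_div A z m (hz (m + 1) le_rfl).ne'
  refine le_of_mul_le_mul_left ?_ (by positivity : (0 : ℝ) < m + 2)
  linear_combination a * idx + b * idy - idz + hsum - hlin

theorem concaveOn_esymmOn_div (A : Finset ι) (m : ℕ) :
    ConcaveOn ℝ (gardingCone A (m + 1)) fun x => esymmOn A x (m + 1) / esymmOn A x m := by
  induction m generalizing A with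
  | zero =>
    have hlin : ∀ (x y : ι → ℝ) (a b : ℝ),
        esymmOn A (a • x + b • y) 1 = a * esymmOn A x 1 + b * esymmOn A y 1 := by
      simp [esymmOn_one, sum_add_distrib, mul_sum]
    simp only [esymmOn_zero, div_one]
    refine ⟨fun x hx y hy a b ha hb hab => ?_, fun x _ y _ a b _ _ _ => (hlin x y a b).ge⟩
    refine mem_gardingCone_succ.2 ⟨by simp [gardingCone_zero], ?_⟩
    rw [hlin]
    exact convex_Ioi (0 : ℝ) (hx 1 le_rfl) (hy 1 le_rfl) ha hb hab
  | succ m ih =>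
    have hz {x y : ι → ℝ} {a b : ℝ} (hx : x ∈ gardingCone A (m + 2))
        (hy : y ∈ gardingCone A (m + 2)) (ha : 0 ≤ a) (hb : 0 ≤ b) (hab : a + b = 1) :
        a • x + b • y ∈ gardingCone A (m + 1) :=
      (ih A).1 (gardingCone_succ_subset A _ hx) (gardingCone_succ_subset A _ hy) ha hb hab
    have key {x y : ι → ℝ} {a b : ℝ} (hx : x ∈ gardingCone A (m + 2))
        (hy : y ∈ gardingCone A (m + 2)) (ha : 0 ≤ a) (hb : 0 ≤ b) (hab : a + b = 1) :=
      esymmOn_div_le_of_concaveOn_erase (fun i _ => ih (A.erase i)) hx hy ha hb hab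
        (hz hx hy ha hb hab)
    have hquot_pos {x : ι → ℝ} (hx : x ∈ gardingCone A (m + 2)) :
        0 < esymmOn A x (m + 2) / esymmOn A x (m + 1) :=
      div_pos (hx (m + 2) le_rfl) (hx (m + 1) (by omega))
    refine ⟨fun x hx y hy a b ha hb hab => mem_gardingCone_succ.2 ⟨hz hx hy ha hb hab, ?_⟩,
      fun x hx y hy a b ha hb hab => key hx hy ha hb hab⟩
    have hq := (convex_Ioi (0 : ℝ) (hquot_pos hx) (hquot_pos hy) ha hb hab).trans_le
      (key hx hy ha hb hab)
    exact (div_pos_iff_of_pos_right (hz hx hy ha hb hab (m + 1) le_rfl)).1 hq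

theorem concaveOn_log_esymmOn (A : Finset ι) (m : ℕ) :
    ConcaveOn ℝ (gardingCone A m) fun x => Real.log (esymmOn A x m) := by
  induction m with
  | zero =>
    simp only [esymmOn_zero, Real.log_one, gardingCone_zero]
    exact concaveOn_const 0 convex_univ
  | succ m ih =>
    have hq := concaveOn_esymmOn_div A m
    refine ((ih.subset (gardingCone_succ_subset A m) hq.1).add
      (hq.log fun x hx => div_pos (hx (m + 1) le_rfl) (hx m (by omega)))).congr fun x hx => ?_
    simp only [Pi.add_apply]
    rw [Real.log_div (hx (m + 1) le_rfl).ne' (hx m (by omega)).ne']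
    ring

end GardingCone

theorem GammaCone.mem_gardingCone {n m : ℕ} {x : Fin n → ℝ} (hx : GammaCone n m x) :
    x ∈ gardingCone univ m := by
  intro k hk
  rcases Nat.eq_zero_or_pos k with rfl | hk0
  · simp
  · exact hx k hk0 hk

theorem esymm_log_concave_general (n m : ℕ)
    (lam mu : Fin n → ℝ) (hlam : GammaCone n m lam) (hmu : GammaCone n m mu)
    (t : ℝ) (ht0 : 0 ≤ t) (ht1 : t ≤ 1) :
    t * Real.log (esymmS n m lam) + (1 - t) * Real.log (esymmS n m mu) ≤
      Real.log (esymmS n m (fun i => t * lam i + (1 - t) * mu i)) :=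
  (concaveOn_log_esymmOn univ m).2 hlam.mem_gardingCone hmu.mem_gardingCone ht0 (sub_nonneg.2 ht1)
    (add_sub_cancel t 1)

/-- Concavity of log S_m on the Gårding cone. -/
theorem esymm_log_concave (n m : ℕ) (hm : 1 ≤ m) (hmn : m ≤ n)
    (lam mu : Fin n → ℝ) (hlam : GammaCone n m lam) (hmu : GammaCone n m mu)
    (t : ℝ) (ht0 : 0 ≤ t) (ht1 : t ≤ 1) :
    t * Real.log (esymmS n m lam) + (1 - t) * Real.log (esymmS n m mu) ≤
      Real.log (esymmS n m (fun i => t * lam i + (1 - t) * mu i)) :=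
  esymm_log_concave_general n m lam mu hlam hmu t ht0 ht1
end

section
/- Let Ω ⊂ ℝ^n be a nonempty open set and let ψ : Ω → ℝ be a nonnegative differentiable function whose gradient ∇ψ is Lipschitz on Ω with constant M ≥ 0 (the C^{1,1} hypothesis). Then √ψ is locally Lipschitz in Ω, and for every x ∈ Ω with ψ(x) > 0 one has |∇ψ(x)|/(2√(ψ(x))) ≤ max( |∇ψ(x)|/(2·dist(x, ∂Ω)), (1 + M)/2 ); here |∇√ψ(x)| = |∇ψ(x)|/(2√(ψ(x))) at such points. -/
/-!
If `∇ψ` is `M`-Lipschitz on a set containing the segment from `x` to `x + h`, the descent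
inequality `ψ (x + h) ≤ ψ x + ⟪∇ψ x, h⟫ + M |h|² / 2` holds. Stepping a distance `t`
against the gradient and using `ψ (x + h) ≥ 0` gives `|∇ψ x| t ≤ ψ x + M t² / 2` whenever the
closed ball of radius `t` about `x` lies in `Ω`. With `t = √(ψ x)` this is the pointwise bound,
unless that ball leaves `Ω`, in which case `√(ψ x) ≥ dist(x, ∂Ω)`. With `t = min(√(ψ + δ), r)` it
bounds the gradient of `√(ψ + δ)` uniformly near `x`; since `√ψ` itself need not be
differentiable where `ψ = 0`, the local Lipschitz bound is obtained by letting `δ → 0`.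
-/

open Metric Set Filter
open scoped NNReal

section

variable {E : Type*} [NormedAddCommGroup E] [InnerProductSpace ℝ E] [CompleteSpace E]
  {f : E → ℝ} {s : Set E} {K : ℝ≥0}

theorem image_add_le_of_lipschitzOnWith_gradient (hf : ∀ y ∈ s, DifferentiableAt ℝ f y)
    (hK : LipschitzOnWith K (gradient f) s) {x h : E} (hxh : segment ℝ x (x + h) ⊆ s) :
    f (x + h) ≤ f x + inner ℝ (gradient f x) h + K * ‖h‖ ^ 2 / 2 := by
  have hmem : ∀ τ ∈ Icc (0 : ℝ) 1, x + τ • h ∈ s := fun τ hτ =>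
    hxh (by rw [segment_eq_image']; exact ⟨τ, hτ, by rw [add_sub_cancel_left]⟩)
  have hderiv : ∀ τ ∈ Icc (0 : ℝ) 1, HasDerivAt (fun τ : ℝ => f (x + τ • h))
      (inner ℝ (gradient f (x + τ • h)) h) τ := by
    intro τ hτ
    have hline : HasDerivAt (fun τ : ℝ => x + τ • h) h τ := by
      simpa using ((hasDerivAt_id τ).smul_const h).const_add x
    rw [inner_gradient_left]
    exact (hf _ (hmem τ hτ)).hasFDerivAt.comp_hasDerivAt τ hline
  set H : ℝ → ℝ := fun τ =>
    f x + τ * inner ℝ (gradient f x) h + K * τ ^ 2 * ‖h‖ ^ 2 / 2 - f (x + τ • h)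
  have hH : ∀ τ ∈ Icc (0 : ℝ) 1, HasDerivAt H (inner ℝ (gradient f x) h + K * τ * ‖h‖ ^ 2
      - inner ℝ (gradient f (x + τ • h)) h) τ := by
    intro τ hτ
    have hpoly := (((hasDerivAt_id τ).mul_const (inner ℝ (gradient f x) h)).const_add (f x)).add
      ((((hasDerivAt_pow 2 τ).const_mul (K : ℝ)).mul_const (‖h‖ ^ 2)).div_const 2)
    exact (hpoly.sub (hderiv τ hτ)).congr_deriv (by simp only [Nat.cast_ofNat]; ring)
  have hH_nonneg : ∀ τ ∈ Icc (0 : ℝ) 1, 0 ≤ inner ℝ (gradient f x) h + K * τ * ‖h‖ ^ 2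
      - inner ℝ (gradient f (x + τ • h)) h := by
    intro τ hτ
    have hdist : ‖gradient f (x + τ • h) - gradient f x‖ ≤ K * (τ * ‖h‖) := by
      have := hK.norm_sub_le (hmem τ hτ) (hmem 0 ⟨le_rfl, zero_le_one⟩)
      simpa [norm_smul, abs_of_nonneg hτ.1] using this
    have hinner := real_inner_le_norm (gradient f (x + τ • h) - gradient f x) h
    rw [inner_sub_left] at hinner
    linarith [mul_le_mul_of_nonneg_right hdist (norm_nonneg h)]
  have hmono : MonotoneOn H (Icc 0 1) :=
    monotoneOn_of_hasDerivWithinAt_nonneg (convex_Icc 0 1)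
      (fun τ hτ => (hH τ hτ).continuousAt.continuousWithinAt)
      (fun τ hτ => (hH τ (interior_subset hτ)).hasDerivWithinAt)
      (fun τ hτ => hH_nonneg τ (interior_subset hτ))
  have h01 := hmono (left_mem_Icc.2 zero_le_one) (right_mem_Icc.2 zero_le_one) zero_le_one
  simp only [H, zero_mul, add_zero, zero_pow two_ne_zero, mul_zero, zero_div, zero_smul,
    sub_self, one_mul, one_pow, mul_one, one_smul, sub_nonneg] at h01
  linarith

theorem norm_gradient_mul_le_of_nonneg (hf0 : ∀ y ∈ s, 0 ≤ f y)
    (hf : ∀ y ∈ s, DifferentiableAt ℝ f y) (hK : LipschitzOnWith K (gradient f) s)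
    {x : E} {t : ℝ} (ht : 0 ≤ t) (hxt : closedBall x t ⊆ s) :
    ‖gradient f x‖ * t ≤ f x + K * t ^ 2 / 2 := by
  set g := gradient f x
  have hfx := hf0 x (hxt (mem_closedBall_self ht))
  rcases eq_or_ne g 0 with hg | hg
  · rw [hg, norm_zero, zero_mul]
    positivity
  set h : E := -((t / ‖g‖) • g)
  have hnorm : ‖h‖ = t := by
    rw [norm_neg, norm_smul, Real.norm_of_nonneg (by positivity),
      div_mul_cancel₀ _ (norm_ne_zero_iff.2 hg)]
  have hinner : inner ℝ g h = -(‖g‖ * t) := by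
    rw [inner_neg_right, real_inner_smul_right, real_inner_self_eq_norm_sq]
    field_simp
  have hseg : segment ℝ x (x + h) ⊆ s :=
    ((convex_closedBall x t).segment_subset (mem_closedBall_self ht)
      (by rw [mem_closedBall, dist_self_add_left, hnorm])).trans hxt
  have hdescent := image_add_le_of_lipschitzOnWith_gradient hf hK hseg
  have hfxh := hf0 (x + h) (hseg (right_mem_segment ℝ x (x + h)))
  rw [hinner, hnorm] at hdescent
  linarith

theorem norm_gradient_le_mul_sqrt_add (hf0 : ∀ y ∈ s, 0 ≤ f y)
    (hf : ∀ y ∈ s, DifferentiableAt ℝ f y) (hK : LipschitzOnWith K (gradient f) s)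
    {x : E} {r B δ : ℝ} (hr : 0 < r) (hxr : closedBall x r ⊆ s) (hB : f x ≤ B) (hδ : 0 < δ) :
    ‖gradient f x‖ ≤ (1 + K / 2 + B / r ^ 2) * √(f x + δ) := by
  have hfx := hf0 x (hxr (mem_closedBall_self hr.le))
  set σ := √(f x + δ)
  have hσ : 0 < σ := Real.sqrt_pos.2 (by linarith)
  have hσ2 : σ ^ 2 = f x + δ := Real.sq_sqrt (by linarith)
  have hBr : 0 ≤ B / r ^ 2 := by have : 0 ≤ B := hfx.trans hB; positivity
  rcases le_or_gt σ r with hσr | hσr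
  · have key := norm_gradient_mul_le_of_nonneg hf0 hf hK hσ.le
      ((closedBall_subset_closedBall hσr).trans hxr)
    have : ‖gradient f x‖ ≤ (1 + K / 2) * σ := by
      rw [← mul_le_mul_iff_left₀ hσ]
      nlinarith
    nlinarith
  · have key := norm_gradient_mul_le_of_nonneg hf0 hf hK hr.le hxr
    have : ‖gradient f x‖ ≤ (K / 2 + B / r ^ 2) * r := by
      rw [← mul_le_mul_iff_left₀ hr]
      have : B / r ^ 2 * r * r = B := by field_simp
      nlinarith
    nlinarith [K.coe_nonneg]

theorem lipschitzOnWith_sqrt_of_norm_gradient_le (hs : Convex ℝ s) (hf0 : ∀ y ∈ s, 0 ≤ f y)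
    (hf : ∀ y ∈ s, DifferentiableAt ℝ f y) {L : ℝ≥0}
    (hbound : ∀ δ > 0, ∀ y ∈ s, ‖gradient f y‖ ≤ 2 * L * √(f y + δ)) :
    LipschitzOnWith L (fun y => √(f y)) s := by
  have hreg : ∀ δ > 0, LipschitzOnWith L (fun y => √(f y + δ)) s := by
    intro δ hδ
    refine hs.lipschitzOnWith_of_nnnorm_hasFDerivWithin_le (fun y hy =>
      (((hf y hy).hasFDerivAt.add_const δ).sqrt (by linarith [hf0 y hy])).hasFDerivWithinAt)
      (fun y hy => ?_)
    have hσ : 0 < √(f y + δ) := Real.sqrt_pos.2 (by linarith [hf0 y hy])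
    rw [← NNReal.coe_le_coe, coe_nnnorm, norm_smul, Real.norm_of_nonneg (by positivity),
      ← toDual_gradient, LinearIsometryEquiv.norm_map, one_div, inv_mul_le_iff₀ (by positivity)]
    linarith [hbound δ hδ y hy]
  refine (isClosed_setOfPred_lipschitzOnWith L s).mem_of_tendsto
    (f := fun δ y => √(f y + δ)) (b := nhdsWithin 0 (Ioi 0)) ?_
    (eventually_mem_nhdsWithin.mono hreg)
  refine tendsto_pi_nhds.2 fun y => Tendsto.mono_left ?_ nhdsWithin_le_nhds
  simpa using ((continuous_const_add (f y)).sqrt).tendsto 0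

theorem exists_lipschitzOnWith_sqrt_ball (hs : IsOpen s) (hf0 : ∀ y ∈ s, 0 ≤ f y)
    (hf : ∀ y ∈ s, DifferentiableAt ℝ f y) (hK : LipschitzOnWith K (gradient f) s)
    {x : E} (hx : x ∈ s) :
    ∃ ε > 0, ∃ C : ℝ≥0, LipschitzOnWith C (fun y => √(f y)) (ball x ε) := by
  obtain ⟨ρ, hρ, hρs⟩ := Metric.mem_nhds_iff.1 <| inter_mem (hs.mem_nhds hx)
    ((hf x hx).continuousAt.eventually_lt continuousAt_const (lt_add_one (f x)))
  set ε := ρ / 2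
  have hε : 0 < ε := half_pos hρ
  have hερ : ε + ε = ρ := add_halves ρ
  have hball : ∀ y ∈ ball x ε, closedBall y ε ⊆ ball x ρ := fun y hy =>
    closedBall_subset_ball' (by rw [mem_ball] at hy; linarith)
  set B := f x + 1
  have hB : 0 ≤ B := by linarith [hf0 x hx]
  refine ⟨ε, hε, ((1 + K / 2 + B / ε ^ 2) / 2).toNNReal,
    lipschitzOnWith_sqrt_of_norm_gradient_le (convex_ball x ε)
      (fun y hy => hf0 y (hρs (ball_subset_ball (by linarith) hy)).1)
      (fun y hy => hf y (hρs (ball_subset_ball (by linarith) hy)).1) fun δ hδ y hy => ?_⟩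
  have hys : closedBall y ε ⊆ s := fun z hz => (hρs (hball y hy hz)).1
  have hyB : f y ≤ B := (hρs (hball y hy (mem_closedBall_self hε.le))).2.le
  rw [Real.coe_toNNReal _ (by positivity)]
  linarith [norm_gradient_le_mul_sqrt_add hf0 hf hK hε hys hyB hδ]

theorem norm_gradient_div_two_sqrt_le (hs : IsOpen s) (hf0 : ∀ y ∈ s, 0 ≤ f y)
    (hf : ∀ y ∈ s, DifferentiableAt ℝ f y) (hK : LipschitzOnWith K (gradient f) s)
    {x : E} (hx : x ∈ s) (hfx : 0 < f x) :
    ‖gradient f x‖ / (2 * √(f x)) ≤ max (‖gradient f x‖ / (2 * infDist x sᶜ)) ((1 + K) / 2) := by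
  set t := √(f x)
  have ht : 0 < t := Real.sqrt_pos.2 hfx
  have ht2 : t ^ 2 = f x := Real.sq_sqrt hfx.le
  by_cases hxt : closedBall x t ⊆ s
  · refine le_max_of_le_right ?_
    have key := norm_gradient_mul_le_of_nonneg hf0 hf hK ht.le hxt
    rw [div_le_div_iff₀ (by positivity) two_pos]
    nlinarith [K.coe_nonneg]
  · refine le_max_of_le_left ?_
    obtain ⟨z, hzt, hzs⟩ := not_subset.1 hxt
    have hd : 0 < infDist x sᶜ :=
      (hs.isClosed_compl.notMem_iff_infDist_pos ⟨z, hzs⟩).1 (not_not_intro hx)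
    have hdt : infDist x sᶜ ≤ t := (infDist_le_dist_of_mem hzs).trans (mem_closedBall'.1 hzt)
    gcongr

end

theorem blocki_sqrt_lemma_general (n : ℕ) (Ω : Set (EuclideanSpace ℝ (Fin n)))
    (hΩ : IsOpen Ω)
    (ψ : EuclideanSpace ℝ (Fin n) → ℝ)
    (hnonneg : ∀ x ∈ Ω, 0 ≤ ψ x)
    (hdiff : ∀ x ∈ Ω, DifferentiableAt ℝ ψ x)
    (M : ℝ) (hM : 0 ≤ M)
    (hLip : LipschitzOnWith (Real.toNNReal M) (gradient ψ) Ω) :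
    (∀ x ∈ Ω, ∃ ε > 0, ∃ C : NNReal,
      LipschitzOnWith C (fun y => Real.sqrt (ψ y)) (ball x ε ∩ Ω)) ∧
    (∀ x ∈ Ω, 0 < ψ x →
      ‖gradient ψ x‖ / (2 * Real.sqrt (ψ x)) ≤
        max (‖gradient ψ x‖ / (2 * infDist x Ωᶜ)) ((1 + M) / 2)) := by
  refine ⟨fun x hx => ?_, fun x hx hpos => ?_⟩
  · obtain ⟨ε, hε, C, hC⟩ := exists_lipschitzOnWith_sqrt_ball hΩ hnonneg hdiff hLip hx
    exact ⟨ε, hε, C, hC.mono inter_subset_left⟩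
  · simpa only [Real.coe_toNNReal M hM] using
      norm_gradient_div_two_sqrt_le hΩ hnonneg hdiff hLip hx hpos

/-- Błocki's calculus lemma: if `ψ ≥ 0` is differentiable on an open set `Ω ⊆ ℝ^n` with
`M`-Lipschitz gradient (the `C^{1,1}` hypothesis), then `√ψ` is locally Lipschitz in `Ω`,
and at every point where `ψ > 0` the gradient of `√ψ`, namely `|∇ψ|/(2√ψ)`, is bounded by
`max(|∇ψ|/(2 dist(·,∂Ω)), (1+M)/2)`. -/
theorem blocki_sqrt_lemma (n : ℕ) (Ω : Set (EuclideanSpace ℝ (Fin n)))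
    (hΩ : IsOpen Ω) (hne : Ω.Nonempty)
    (ψ : EuclideanSpace ℝ (Fin n) → ℝ)
    (hnonneg : ∀ x ∈ Ω, 0 ≤ ψ x)
    (hdiff : ∀ x ∈ Ω, DifferentiableAt ℝ ψ x)
    (M : ℝ) (hM : 0 ≤ M)
    (hLip : LipschitzOnWith (Real.toNNReal M) (gradient ψ) Ω) :
    (∀ x ∈ Ω, ∃ ε > 0, ∃ C : NNReal,
      LipschitzOnWith C (fun y => Real.sqrt (ψ y)) (ball x ε ∩ Ω)) ∧
    (∀ x ∈ Ω, 0 < ψ x →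
      ‖gradient ψ x‖ / (2 * Real.sqrt (ψ x)) ≤
        max (‖gradient ψ x‖ / (2 * infDist x Ωᶜ)) ((1 + M) / 2)) :=
  blocki_sqrt_lemma_general n Ω hΩ ψ hnonneg hdiff M hM hLip
end

section
/- Let 1 ≤ k ≤ n and let λ ∈ ℝ^n satisfy S_j(λ) ≥ 0 for all j = 1,…,k (i.e. λ lies in the closure of Γ_k). Then for every t > 0, S_k(λ + t·𝟙) > S_k(λ), where 𝟙 = (1,1,…,1) ∈ ℝ^n. (Strict monotonicity of S_k under a uniform positive shift on the closed cone; this is inequality (4.4) in the paper's Lemma 4.1.) -/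
/-!
Expanding each product `∏ i ∈ A, (λ i + t)` over the subsets of `A` and counting how many
`k`-sets contain a given `j`-set gives
`S_k(λ + t𝟙) = ∑_{j ≤ k} C(n - j, k - j) t^(k - j) S_j(λ)`.
The `j = k` term is `S_k(λ)`, the `j = 0` term is `C(n, k) t^k > 0`, and the terms with
`0 < j < k` are nonnegative on the closed cone.
-/

open Finset

namespace Finset

variable {α : Type*} [DecidableEq α]

theorem sum_powersetCard_sum_powersetCard {M : Type*} [AddCommMonoid M] (s : Finset α)
    {j k : ℕ} (hjk : j ≤ k) (F : Finset α → M) :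
    ∑ A ∈ s.powersetCard k, ∑ u ∈ A.powersetCard j, F u =
      (#s - j).choose (k - j) • ∑ u ∈ s.powersetCard j, F u := by
  rw [sum_comm' (t' := s.powersetCard j) (s' := fun u => {A ∈ s.powersetCard k | u ⊆ A})]
  · rw [smul_sum]
    refine sum_congr rfl fun u hu => ?_
    obtain ⟨hus, rfl⟩ := mem_powersetCard.1 hu
    rw [sum_const, card_filter_powersetCard_subset u s k hus hjk]
  · intro A u
    simp only [mem_powersetCard, mem_filter]
    constructor
    · rintro ⟨⟨hAs, rfl⟩, huA, rfl⟩
      exact ⟨⟨⟨hAs, rfl⟩, huA⟩, huA.trans hAs, rfl⟩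
    · rintro ⟨⟨⟨hAs, rfl⟩, huA⟩, -, rfl⟩
      exact ⟨⟨hAs, rfl⟩, huA, rfl⟩

variable {R : Type*} [CommSemiring R]

theorem prod_add_const_eq_sum_range (A : Finset α) (f : α → R) (t : R) :
    ∏ i ∈ A, (f i + t) =
      ∑ j ∈ range (#A + 1), t ^ (#A - j) * ∑ u ∈ A.powersetCard j, ∏ i ∈ u, f i := by
  rw [prod_add, powerset_card_disjiUnion]
  refine (sum_disjiUnion _ _ _).trans ?_
  refine sum_congr rfl fun j _ => ?_
  rw [mul_sum]
  refine sum_congr rfl fun u hu => ?_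
  obtain ⟨huA, rfl⟩ := mem_powersetCard.1 hu
  rw [prod_const, card_sdiff_of_subset huA, mul_comm]

theorem sum_powersetCard_prod_add_const (s : Finset α) (k : ℕ) (f : α → R) (t : R) :
    ∑ A ∈ s.powersetCard k, ∏ i ∈ A, (f i + t) =
      ∑ j ∈ range (k + 1),
        ((#s - j).choose (k - j) : R) * t ^ (k - j) * ∑ u ∈ s.powersetCard j, ∏ i ∈ u, f i :=
  calc ∑ A ∈ s.powersetCard k, ∏ i ∈ A, (f i + t)
      = ∑ A ∈ s.powersetCard k, ∑ j ∈ range (k + 1),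
          ∑ u ∈ A.powersetCard j, t ^ (k - j) * ∏ i ∈ u, f i := by
        refine sum_congr rfl fun A hA => ?_
        rw [prod_add_const_eq_sum_range, (mem_powersetCard.1 hA).2]
        simp_rw [mul_sum]
    _ = ∑ j ∈ range (k + 1), ∑ A ∈ s.powersetCard k,
          ∑ u ∈ A.powersetCard j, t ^ (k - j) * ∏ i ∈ u, f i := sum_comm
    _ = _ := by
        refine sum_congr rfl fun j hj => ?_
        rw [sum_powersetCard_sum_powersetCard s (Nat.lt_succ_iff.1 (mem_range.1 hj)),
          nsmul_eq_mul, ← mul_sum, mul_assoc]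

end Finset

theorem esymmS_zero (n : ℕ) (lam : Fin n → ℝ) : esymmS n 0 lam = 1 := by
  simp [esymmS]

theorem esymmS_add_const (n k : ℕ) (lam : Fin n → ℝ) (t : ℝ) :
    esymmS n k (fun i => lam i + t) =
      ∑ j ∈ range (k + 1), ((n - j).choose (k - j) : ℝ) * t ^ (k - j) * esymmS n j lam := by
  simpa only [esymmS, card_univ, Fintype.card_fin] using sum_powersetCard_prod_add_const univ k lam t

/-- Strict monotonicity of `S_k` under a uniform positive shift, on the closure of `Γ_k`. -/
theorem esymm_strict_mono_shift (n k : ℕ) (hk : 1 ≤ k) (hkn : k ≤ n)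
    (lam : Fin n → ℝ) (hlam : ∀ j : ℕ, 1 ≤ j → j ≤ k → 0 ≤ esymmS n j lam)
    (t : ℝ) (ht : 0 < t) :
    esymmS n k lam < esymmS n k (fun i => lam i + t) := by
  obtain ⟨m, rfl⟩ := Nat.exists_eq_add_of_le' hk
  rw [esymmS_add_const, sum_range_succ, sum_range_succ']
  have hconst : 0 < (n.choose (m + 1) : ℝ) * t ^ (m + 1) :=
    mul_pos (mod_cast Nat.choose_pos hkn) (pow_pos ht _)
  have hmiddle : 0 ≤ ∑ j ∈ range m,
      ((n - (j + 1)).choose (m + 1 - (j + 1)) : ℝ) * t ^ (m + 1 - (j + 1)) *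
        esymmS n (j + 1) lam := by
    refine sum_nonneg fun j hj => mul_nonneg (by positivity) (hlam _ (by omega) ?_)
    exact Nat.succ_le_succ (mem_range.1 hj).le
  simp only [Nat.sub_zero, Nat.sub_self, Nat.choose_zero_right, pow_zero, esymmS_zero, Nat.cast_one,
    one_mul, mul_one]
  linarith
end
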